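/- arXiv:2103.08099 — 13 statements merged into one kernel-verified Lean document; each statement's English description precedes it below -/
import Mathlib

section
/- Let $1 < a < d$ be integers and for each $n \geq 0$ let $E_n = \bigcup_{i=0}^{n} [ia, id] \subseteq \mathbb{Z}$. Then for $n \geq 1$, $E_{n+1} = E_n + \{0, d\}$ (Minkowski sum) if and only if $n(d-a) \geq d-1$. -/
/-!
Since `a ≤ d`, shifting by `d` maps `[i a, i d]` into `[(i+1) a, (i+1) d]`, so `E n + {0, d} ⊆ E (n+1)`
always, and `E (n+1) = E n ∪ [(n+1) a, (n+1) d]`. Only the top interval needs to be covered: its part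
`≤ n d` lies in `[n a, n d]` because `a ≥ 0`, while an element `x > n d` can only be covered as `x - d`
with `x - d` in the top interval `[n a, n d]` of `E n`, i.e. `x ≥ n a + d`. So equality holds iff the
gap `[n d + 1, n a + d - 1]` is empty, i.e. iff `n (d - a) ≥ d - 1`; otherwise
`max (n d + 1) ((n+1) a)` lies in the gap and in the top interval.
-/

open Pointwise Set

theorem Set.mem_add_insert_zero {G : Type*} [AddGroup G] {S : Set G} {d x : G} :
    x ∈ S + {0, d} ↔ x ∈ S ∨ x - d ∈ S := by
  rw [insert_eq, add_union, singleton_zero, add_zero, add_singleton, image_add_right, mem_union,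
    mem_preimage, sub_eq_add_neg]

def unionIcc (a d : ℤ) (n : ℕ) : Set ℤ :=
  ⋃ i ∈ Finset.range (n + 1), Icc ((i : ℤ) * a) ((i : ℤ) * d)

section unionIcc

variable {a d x : ℤ} {n : ℕ}

theorem mem_unionIcc : x ∈ unionIcc a d n ↔ ∃ i ≤ n, (i : ℤ) * a ≤ x ∧ x ≤ (i : ℤ) * d := by
  simp only [unionIcc, Finset.mem_range, Nat.lt_succ_iff, mem_iUnion, mem_Icc, exists_prop]

theorem unionIcc_succ :
    unionIcc a d (n + 1) = unionIcc a d n ∪ Icc (((n + 1 : ℕ) : ℤ) * a) (((n + 1 : ℕ) : ℤ) * d) := by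
  rw [unionIcc, Finset.range_add_one, Finset.set_biUnion_insert, union_comm, unionIcc]

theorem Icc_subset_unionIcc : Icc ((n : ℤ) * a) ((n : ℤ) * d) ⊆ unionIcc a d n :=
  subset_biUnion_of_mem (u := fun i : ℕ => Icc ((i : ℤ) * a) ((i : ℤ) * d))
    (Finset.mem_coe.2 (Finset.self_mem_range_succ n))

theorem le_of_mem_unionIcc (hd : 0 ≤ d) (hx : x ∈ unionIcc a d n) : x ≤ n * d := by
  obtain ⟨i, hi, -, hxi⟩ := mem_unionIcc.1 hx
  exact hxi.trans (mul_le_mul_of_nonneg_right (by exact_mod_cast hi) hd)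

theorem mem_Icc_of_mem_unionIcc (hd : 0 ≤ d) (hx : x ∈ unionIcc a d n)
    (hlt : (n : ℤ) * d < x + d) : x ∈ Icc ((n : ℤ) * a) ((n : ℤ) * d) := by
  obtain ⟨i, hi, hax, hxd⟩ := mem_unionIcc.1 hx
  obtain rfl : i = n := by
    by_contra hne
    have : (i : ℤ) + 1 ≤ n := by exact_mod_cast lt_of_le_of_ne hi hne
    nlinarith
  exact ⟨hax, hxd⟩

theorem unionIcc_add_subset (had : a ≤ d) : unionIcc a d n + {0, d} ⊆ unionIcc a d (n + 1) := by
  intro x hx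
  simp only [mem_add_insert_zero, mem_unionIcc] at hx ⊢
  rcases hx with ⟨i, hi, hax, hxd⟩ | ⟨i, hi, hax, hxd⟩
  · exact ⟨i, hi.trans n.le_succ, hax, hxd⟩
  · refine ⟨i + 1, Nat.succ_le_succ hi, ?_, ?_⟩ <;> push_cast <;> linarith

theorem unionIcc_succ_subset_iff (ha : 0 ≤ a) (had : a < d) :
    unionIcc a d (n + 1) ⊆ unionIcc a d n + {0, d} ↔ d - 1 ≤ n * (d - a) := by
  have hd : 0 ≤ d := ha.trans had.le
  constructor
  · intro hsub
    by_contra! hgap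
    set x := max (n * d + 1) ((n + 1) * a)
    have hnx : (n : ℤ) * d < x := (lt_add_one _).trans_le (le_max_left _ _)
    have hx : x ∈ unionIcc a d (n + 1) := by
      refine Icc_subset_unionIcc ⟨by push_cast; exact le_max_right _ _, max_le ?_ ?_⟩ <;>
        push_cast <;> nlinarith
    rcases mem_add_insert_zero.1 (hsub hx) with hxE | hxE
    · exact (le_of_mem_unionIcc hd hxE).not_gt hnx
    · have hax := (mem_Icc_of_mem_unionIcc hd hxE (by rwa [sub_add_cancel])).1
      have : x < n * a + d := max_lt (by linarith) (by linarith)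
      linarith
  · intro hgap
    rw [unionIcc_succ, union_subset_iff]
    refine ⟨subset_add_left _ (mem_insert 0 _), fun x ⟨hax, hxd⟩ => ?_⟩
    push_cast at hax hxd
    rw [mem_add_insert_zero]
    by_cases hx : x ≤ n * d
    · exact Or.inl (Icc_subset_unionIcc ⟨by nlinarith, hx⟩)
    · exact Or.inr (Icc_subset_unionIcc ⟨by linarith, by linarith⟩)

end unionIcc

/-- Case A combinatorics: for `1 < a < d` and `E n = ⋃_{i=0}^n [ia, id]`,
one has `E (n+1) = E n + {0, d}` (Minkowski sum) iff `n(d-a) ≥ d-1`, for `n ≥ 1`. -/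
theorem caseA_iff (a d : ℤ) (ha : 1 < a) (had : a < d)
    (E : ℕ → Set ℤ)
    (hE : ∀ n, E n = ⋃ i ∈ Finset.range (n + 1), Set.Icc ((i : ℤ) * a) ((i : ℤ) * d)) :
    ∀ n : ℕ, 1 ≤ n →
      (E (n + 1) = E n + ({0, d} : Set ℤ) ↔ (n : ℤ) * (d - a) ≥ d - 1) := by
  obtain rfl : E = unionIcc a d := funext hE
  intro n _
  rw [subset_antisymm_iff, and_iff_left (unionIcc_add_subset had.le)]
  exact unionIcc_succ_subset_iff (by linarith) had
end

section
/- Let $1 < a < d$ be integers and $E_n = \{\alpha : x^{\alpha}y^{nd-\alpha} \in R\}$ where $R = k[x^{\alpha}y^{d-\alpha} \mid \alpha \in \{0\} \cup [a,d]]$. Then $E_n = \bigcup_{i=0}^{n} [ia, id]$ for all $n \geq 0$. -/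
open Pointwise

lemma fst_image_add (A B : Set (ℤ × ℤ)) :
    Prod.fst '' (A + B) = Prod.fst '' A + Prod.fst '' B := by
  ext x
  constructor
  · rintro ⟨p, ⟨u, hu, v, hv, rfl⟩, rfl⟩
    exact ⟨u.1, ⟨u, hu, rfl⟩, v.1, ⟨v, hv, rfl⟩, rfl⟩
  · rintro ⟨y, ⟨u, hu, rfl⟩, z, ⟨v, hv, rfl⟩, rfl⟩
    exact ⟨u + v, ⟨u, hu, v, hv, rfl⟩, rfl⟩

/-- Case A: with `S = {(α, d-α) : α ∈ {0} ∪ [a,d]}`, `H n` the set of sums of `n`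
elements of `S` (so `H 0 = {0}`, `H (n+1) = H n + S`), and `E n` the set of first
coordinates of `H n`, one has `E n = ⋃_{i=0}^n [ia, id]` for all `n ≥ 0`. -/
theorem caseA_En (a d : ℤ) (ha : 1 < a) (had : a < d)
    (S : Set (ℤ × ℤ))
    (hS : S = {p : ℤ × ℤ | ∃ α : ℤ, (α = 0 ∨ (a ≤ α ∧ α ≤ d)) ∧ p = (α, d - α)})
    (H : ℕ → Set (ℤ × ℤ)) (hH0 : H 0 = {(0, 0)}) (hHs : ∀ n, H (n + 1) = H n + S)
    (E : ℕ → Set ℤ) (hE : ∀ n, E n = Prod.fst '' H n) :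
    ∀ n : ℕ, E n = ⋃ i ∈ Finset.range (n + 1), Set.Icc ((i : ℤ) * a) ((i : ℤ) * d) := by
  have hSfst : Prod.fst '' S = {0} ∪ Set.Icc a d := by
    ext x
    simp only [hS, Set.mem_image, Set.mem_setOf_eq, Set.mem_union, Set.mem_singleton_iff,
      Set.mem_Icc]
    constructor
    · rintro ⟨p, ⟨α, hα, rfl⟩, rfl⟩
      exact hα
    · rintro h
      exact ⟨(x, d - x), ⟨x, h, rfl⟩, rfl⟩
  intro n
  induction n with
  | zero =>
    rw [hE, hH0]
    ext x
    simp
  | succ n ih =>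
    rw [hE, hHs, fst_image_add, ← hE, ih, hSfst]
    rw [Set.add_union]
    have h1 : (⋃ i ∈ Finset.range (n + 1), Set.Icc ((i : ℤ) * a) ((i : ℤ) * d)) + ({0} : Set ℤ)
        = ⋃ i ∈ Finset.range (n + 1), Set.Icc ((i : ℤ) * a) ((i : ℤ) * d) := by
      rw [show ({0} : Set ℤ) = (0 : Set ℤ) from rfl, add_zero]
    have h2 : (⋃ i ∈ Finset.range (n + 1), Set.Icc ((i : ℤ) * a) ((i : ℤ) * d)) + Set.Icc a d
        = ⋃ i ∈ Finset.range (n + 1), Set.Icc (((i : ℤ) + 1) * a) (((i : ℤ) + 1) * d) := by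
      rw [Set.iUnion_add]
      refine Set.iUnion_congr fun i => ?_
      rw [Set.iUnion_add]
      refine Set.iUnion_congr fun hi => ?_
      rw [Set.Icc_add_Icc (mul_le_mul_of_nonneg_left had.le (Int.natCast_nonneg i)) had.le]
      ring_nf
    rw [h1, h2]
    ext x
    simp only [Set.mem_union, Set.mem_iUnion, Set.mem_Icc, Finset.mem_range]
    constructor
    · rintro (⟨i, hi, h⟩ | ⟨i, hi, h⟩)
      · exact ⟨i, by omega, h⟩
      · refine ⟨i + 1, by omega, ?_⟩
        push_cast
        exact h
    · rintro ⟨i, hi, h⟩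
      rcases Nat.lt_or_ge i (n + 1) with h' | h'
      · exact Or.inl ⟨i, h', h⟩
      · have : i = n + 1 := by omega
        subst this
        refine Or.inr ⟨n, by omega, ?_⟩
        push_cast
        push_cast at h
        exact h
end

section
/- Let $M$ be a set of monomials of degree $d > 0$ in $k[x,y]$ containing $x^d$ and $y^d$, let $R = k[M]$ be graded with all elements of $M$ of degree 1, and let $Q = (x^d, y^d) \subseteq R$. If $r = |M|$, then $R_{r(d-1)+1} = Q_{r(d-1)+1}$; in particular $Q$ is a reduction of $R_+$. -/
open Pointwise

lemma mem_E_iff (A : Finset ℕ) (E : ℕ → Set ℕ) (hE0 : E 0 = {0})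
    (hEs : ∀ n, E (n + 1) = E n + (↑A : Set ℕ)) (n : ℕ) (x : ℕ) :
    x ∈ E n ↔ ∃ m : Multiset ℕ, (∀ a ∈ m, a ∈ A) ∧ Multiset.card m = n ∧ m.sum = x := by
  induction n generalizing x with
  | zero =>
    rw [hE0]
    constructor
    · rintro rfl
      exact ⟨0, by simp, by simp, by simp⟩
    · rintro ⟨m, _, hc, hs⟩
      rw [Multiset.card_eq_zero] at hc
      subst hc
      simpa using hs.symm
  | succ n ih =>
    rw [hEs n]
    constructor
    · intro hx
      rw [Set.mem_add] at hx
      obtain ⟨y, hy, a, ha, rfl⟩ := hx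
      obtain ⟨m, hm, hc, hs⟩ := (ih y).mp hy
      refine ⟨a ::ₘ m, ?_, by simp [hc], by simp [hs, Nat.add_comm]⟩
      intro b hb
      rcases Multiset.mem_cons.mp hb with rfl | hb
      · exact ha
      · exact hm b hb
    · rintro ⟨m, hm, hc, rfl⟩
      rcases Multiset.card_pos_iff_exists_mem.mp (by omega : 0 < Multiset.card m) with ⟨a, ha⟩
      obtain ⟨m', rfl⟩ := Multiset.exists_cons_of_mem ha
      rw [Set.mem_add]
      refine ⟨m'.sum, (ih _).mpr ⟨m', fun b hb => hm b (Multiset.mem_cons_of_mem hb),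
        by simpa using hc, rfl⟩, a, hm a (Multiset.mem_cons_self a m'), by simp [Nat.add_comm]⟩

/-- Lemma 1.2 (combinatorial form): let `A ⊆ [0,d]` be the set of `x`-exponents of the
degree-`d` monomials of `M` (so `0, d ∈ A`), `r = |A| = |M|`, and let `E n` be the set
of sums of `n` elements of `A` (the `x`-exponents of the degree-`n` monomials of
`R = k[M]`, so `R_n = Q_n` iff `E n = E (n-1) + {0, d}`).  Then
`E (r(d-1)+1) = E (r(d-1)) + {0, d}`; in particular `Q = (x^d, y^d)` is a reduction
of `R₊`. -/
theorem Q_is_reduction (d : ℕ) (hd : 0 < d) (A : Finset ℕ)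
    (hA : ↑A ⊆ Set.Icc 0 d) (h0 : 0 ∈ A) (hdA : d ∈ A)
    (r : ℕ) (hr : r = A.card)
    (E : ℕ → Set ℕ) (hE0 : E 0 = {0}) (hEs : ∀ n, E (n + 1) = E n + (↑A : Set ℕ)) :
    E (r * (d - 1) + 1) = E (r * (d - 1)) + ({0, d} : Set ℕ) ∧
      ∃ n : ℕ, E (n + 1) = E n + ({0, d} : Set ℕ) := by
  set N := r * (d - 1) with hN
  have key : E (N + 1) = E N + ({0, d} : Set ℕ) := by
    apply Set.Subset.antisymm
    · intro x hx
      obtain ⟨m, hm, hc, rfl⟩ := (mem_E_iff A E hE0 hEs _ x).mp hx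
      -- pigeonhole: some a has count ≥ d
      have hsub : m.toFinset ⊆ A := fun b hb => hm b (Multiset.mem_toFinset.mp hb)
      have hpig : ∃ a, d ≤ m.count a := by
        by_contra h
        push_neg at h
        have hcard : Multiset.card m = ∑ a ∈ m.toFinset, m.count a :=
          (Multiset.toFinset_sum_count_eq m).symm
        have hb : ∑ a ∈ m.toFinset, m.count a ≤ m.toFinset.card * (d - 1) := by
          calc ∑ a ∈ m.toFinset, m.count a ≤ ∑ _a ∈ m.toFinset, (d - 1) :=
                Finset.sum_le_sum (fun a _ => by have := h a; omega)
            _ = m.toFinset.card * (d - 1) := by rw [Finset.sum_const, smul_eq_mul]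
        have hcA : m.toFinset.card ≤ r := hr ▸ Finset.card_le_card hsub
        have : m.toFinset.card * (d - 1) ≤ r * (d - 1) :=
          Nat.mul_le_mul_right _ hcA
        omega
      obtain ⟨a, hcount⟩ := hpig
      have ham : a ∈ m := Multiset.count_pos.mp (by omega)
      have haA : a ∈ A := hm a ham
      have had : a ≤ d := (hA haA).2
      have hdm : d ≤ Multiset.card m := le_trans hcount (Multiset.count_le_card a m)
      rw [Set.mem_add]
      rcases Nat.eq_zero_or_pos a with rfl | hapos
      · -- a = 0: just remove one 0
        obtain ⟨m', rfl⟩ := Multiset.exists_cons_of_mem ham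
        refine ⟨m'.sum, (mem_E_iff A E hE0 hEs _ _).mpr
          ⟨m', fun b hb => hm b (Multiset.mem_cons_of_mem hb), by simp at hc ⊢; omega, rfl⟩,
          0, by simp, by simp⟩
      · -- a ≥ 1: replace d copies of a by a copies of d and d - a copies of 0
        have hle : Multiset.replicate d a ≤ m := Multiset.le_count_iff_replicate_le.mp hcount
        set m' := m - Multiset.replicate d a with hm'
        have hsplit : m' + Multiset.replicate d a = m := tsub_add_cancel_of_le hle
        have hm'card : Multiset.card m' = Multiset.card m - d := by
          have := congrArg Multiset.card hsplit
          simp at this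
          omega
        have hm'sum : m'.sum + d * a = m.sum := by
          have := congrArg Multiset.sum hsplit
          simpa [Multiset.sum_replicate, smul_eq_mul] using this
        set m₃ := Multiset.replicate (a - 1) d + Multiset.replicate (d - a) 0 + m' with hm₃
        have hmem3 : ∀ b ∈ m₃, b ∈ A := by
          intro b hb
          simp only [hm₃, Multiset.mem_add, Multiset.mem_replicate] at hb
          rcases hb with (⟨_, rfl⟩ | ⟨_, rfl⟩) | hb
          · exact hdA
          · exact h0
          · exact hm b (Multiset.mem_of_le (Multiset.sub_le_self _ _) hb)
        have hc3 : Multiset.card m₃ = N := by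
          simp only [hm₃, Multiset.card_add, Multiset.card_replicate]
          omega
        have hs3 : m₃.sum + d = m.sum := by
          have : m₃.sum = (a - 1) * d + m'.sum := by
            simp [hm₃, Multiset.sum_replicate, smul_eq_mul]
          rw [this]
          have h1 : (a - 1) * d + d = a * d := by
            obtain ⟨b, rfl⟩ : ∃ b, a = b + 1 := ⟨a - 1, by omega⟩
            simp [Nat.succ_mul]
          have h2 : a * d = d * a := Nat.mul_comm a d
          omega
        exact ⟨m₃.sum, (mem_E_iff A E hE0 hEs _ _).mpr ⟨m₃, hmem3, hc3, rfl⟩,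
          d, by simp, hs3⟩
    · -- easy inclusion
      rw [hEs N]
      apply Set.add_subset_add_left
      intro t ht
      rcases ht with rfl | ht
      · exact h0
      · simp only [Set.mem_singleton_iff] at ht; subst ht; exact hdA
  exact ⟨key, ⟨N, key⟩⟩
end

section
/- Let $2 \leq a < d$ be integers with $d \geq a+2$, let $R = k[x^d, x^a y^{d-a}, y^d]$ and $Q = (x^d, y^d)$. Then the reduction number $r_Q(R_+)$ equals $d/\gcd(a,d) - 1$. -/
/-!
Every element of `R = k[x^d, x^a y^b, y^d]` is a combination of monomials `x^i y^j` with
`(i, j) = α (d, 0) + β (a, b) + γ (0, d)`. If `(x^a y^b)^n` is `x^d` or `y^d` times an element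
of `R`, comparing exponents gives such a decomposition with `β < n` and `a n = a β + c d`, so
`d ∣ a (n - β)` with `n - β > 0`, forcing `d / gcd(a, d) ≤ n`. Conversely, with `b = d - a`,
`N = d / gcd(a, d)` and `A = a / gcd(a, d)` we have `(x^a y^b)^N = (x^d)^A (y^d)^(N - A)`,
and `N - A ≥ 1` since `a < d`.
-/

open MvPolynomial

theorem Nat.div_gcd_le_of_mul_eq {a d c β n : ℕ} (hd : 0 < d) (hβ : β < n)
    (h : a * n = a * β + c * d) : d / Nat.gcd a d ≤ n := by
  have hmod : n ≡ β [MOD d / Nat.gcd d a] :=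
    Nat.ModEq.cancel_left_div_gcd hd (by rw [Nat.ModEq, h, Nat.add_mul_mod_self_right])
  rw [Nat.gcd_comm]
  exact (Nat.le_of_dvd (by omega) ((Nat.modEq_iff_dvd' hβ.le).mp hmod.symm)).trans (Nat.sub_le _ _)

theorem MvPolynomial.support_subset_closure_of_mem_adjoin {σ R : Type*} [CommSemiring R]
    {S : Set (σ →₀ ℕ)} {p : MvPolynomial σ R}
    (hp : p ∈ Algebra.adjoin R ((monomial · (1 : R)) '' S)) :
    (p.support : Set (σ →₀ ℕ)) ⊆ AddSubmonoid.closure S := by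
  classical
  induction hp using Algebra.adjoin_induction with
  | mem x hx =>
    obtain ⟨s, hs, rfl⟩ := hx
    exact (Finset.coe_subset.mpr support_monomial_subset).trans
      (by simpa using AddSubmonoid.subset_closure hs)
  | algebraMap r =>
    rw [algebraMap_eq, C_apply]
    exact (Finset.coe_subset.mpr support_monomial_subset).trans (by simp [zero_mem])
  | add p q _ _ hp hq =>
    exact (Finset.coe_subset.mpr support_add).trans (by simp [hp, hq])
  | mul p q _ _ hp hq =>
    refine (Finset.coe_subset.mpr (support_mul p q)).trans ?_
    rintro _ hx
    obtain ⟨u, hu, v, hv, rfl⟩ := Finset.mem_add.mp hx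
    exact add_mem (hp hu) (hq hv)

theorem MvPolynomial.le_and_sub_mem_support_of_monomial_eq_mul {σ R : Type*} [CommSemiring R]
    [Nontrivial R] {m s : σ →₀ ℕ} {z : MvPolynomial σ R}
    (h : monomial m (1 : R) = monomial s 1 * z) : s ≤ m ∧ m - s ∈ z.support := by
  classical
  have hcoeff := congr_arg (coeff m) h
  rw [coeff_monomial, if_pos rfl, coeff_monomial_mul', one_mul] at hcoeff
  split_ifs at hcoeff with hsm
  · exact ⟨hsm, mem_support_iff.mpr (hcoeff ▸ one_ne_zero)⟩
  · exact absurd hcoeff one_ne_zero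

theorem exists_coords_of_mem_closure_three {p q a b : ℕ} {e : Fin 2 →₀ ℕ}
    (he : e ∈ AddSubmonoid.closure
      {Finsupp.single 0 p, Finsupp.single 0 a + Finsupp.single 1 b, Finsupp.single 1 q}) :
    ∃ α β γ : ℕ, e 0 = α * p + β * a ∧ e 1 = β * b + γ * q := by
  induction he using AddSubmonoid.closure_induction with
  | mem e he =>
    rcases he with rfl | rfl | rfl
    · exact ⟨1, 0, 0, by simp⟩
    · exact ⟨0, 1, 0, by simp⟩
    · exact ⟨0, 0, 1, by simp⟩
  | zero => exact ⟨0, 0, 0, by simp⟩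
  | add e f _ _ he hf =>
    obtain ⟨α, β, γ, he0, he1⟩ := he
    obtain ⟨α', β', γ', hf0, hf1⟩ := hf
    exact ⟨α + α', β + β', γ + γ', by simp only [Finsupp.add_apply]; rw [he0, hf0]; ring,
      by simp only [Finsupp.add_apply]; rw [he1, hf1]; ring⟩

noncomputable def threeMonomialAlgebra (k : Type*) [CommSemiring k] (a b d : ℕ) :
    Subalgebra k (MvPolynomial (Fin 2) k) :=
  Algebra.adjoin k {X 0 ^ d, X 0 ^ a * X 1 ^ b, X 1 ^ d}

namespace threeMonomialAlgebra

variable {k : Type*} [CommSemiring k] {a b d n : ℕ} {z : MvPolynomial (Fin 2) k}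

theorem eq_adjoin_monomial :
    threeMonomialAlgebra k a b d = Algebra.adjoin k ((monomial · (1 : k)) ''
      {Finsupp.single 0 d, Finsupp.single 0 a + Finsupp.single 1 b, Finsupp.single 1 d}) := by
  simp only [threeMonomialAlgebra, Set.image_insert_eq, Set.image_singleton, X_pow_eq_monomial,
    monomial_mul, one_mul]

theorem exists_exponents_of_mem_support (hz : z ∈ threeMonomialAlgebra k a b d)
    {e : Fin 2 →₀ ℕ} (he : e ∈ z.support) :
    ∃ α β γ : ℕ, e 0 = α * d + β * a ∧ e 1 = β * b + γ * d := by
  rw [eq_adjoin_monomial] at hz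
  exact exists_coords_of_mem_closure_three (support_subset_closure_of_mem_adjoin hz he)

theorem pow_eq_monomial :
    ((X 0 : MvPolynomial (Fin 2) k) ^ a * X 1 ^ b) ^ n =
      monomial (Finsupp.single 0 (a * n) + Finsupp.single 1 (b * n)) 1 := by
  rw [mul_pow, ← pow_mul, ← pow_mul, X_pow_eq_monomial, X_pow_eq_monomial, monomial_mul, one_mul]

theorem exists_pow_div_gcd_eq_X1_pow_mul (had : a < d) :
    ∃ z ∈ threeMonomialAlgebra k a (d - a) d,
      ((X 0 : MvPolynomial (Fin 2) k) ^ a * X 1 ^ (d - a)) ^ (d / Nat.gcd a d) = X 1 ^ d * z := by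
  set N := d / Nat.gcd a d
  set A := a / Nat.gcd a d
  have hAN : A < N := Nat.div_lt_div_of_lt_of_dvd (Nat.gcd_dvd_right a d) had
  have hx : a * N = d * A := by
    rw [← Nat.mul_div_assoc _ (Nat.gcd_dvd_right a d), ← Nat.mul_div_assoc _ (Nat.gcd_dvd_left a d),
      mul_comm]
  have hy : (d - a) * N = d + d * (N - A - 1) := by
    rw [Nat.sub_mul, hx, ← Nat.mul_sub, ← mul_one_add]
    congr 1
    omega
  have hxd : (X 0 : MvPolynomial (Fin 2) k) ^ d ∈ threeMonomialAlgebra k a (d - a) d :=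
    Algebra.subset_adjoin (by simp)
  have hyd : (X 1 : MvPolynomial (Fin 2) k) ^ d ∈ threeMonomialAlgebra k a (d - a) d :=
    Algebra.subset_adjoin (by simp)
  refine ⟨(X 0 ^ d) ^ A * (X 1 ^ d) ^ (N - A - 1), mul_mem (pow_mem hxd _) (pow_mem hyd _), ?_⟩
  rw [mul_pow, ← pow_mul, ← pow_mul, hx, hy, pow_add, pow_mul, pow_mul]
  ring

variable [Nontrivial k]

theorem div_gcd_le_of_pow_eq_X0_pow_mul (hd : 0 < d) (hz : z ∈ threeMonomialAlgebra k a b d)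
    (h : ((X 0 : MvPolynomial (Fin 2) k) ^ a * X 1 ^ b) ^ n = X 0 ^ d * z) :
    d / Nat.gcd a d ≤ n := by
  rw [pow_eq_monomial, X_pow_eq_monomial] at h
  obtain ⟨hle, hsupp⟩ := le_and_sub_mem_support_of_monomial_eq_mul h
  obtain ⟨α, β, -, hx, -⟩ := exists_exponents_of_mem_support hz hsupp
  have hle0 := hle 0
  simp only [Finsupp.coe_tsub, Finsupp.coe_add, Pi.sub_apply, Pi.add_apply, Finsupp.single_eq_same,
    Finsupp.single_eq_of_ne zero_ne_one, add_zero] at hx hle0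
  have hβ : β * a < n * a := by rw [mul_comm n]; omega
  exact Nat.div_gcd_le_of_mul_eq (c := α + 1) hd (Nat.lt_of_mul_lt_mul_right hβ)
    (by rw [add_mul, one_mul, mul_comm a β]; omega)

theorem div_gcd_le_of_pow_eq_X1_pow_mul (hd : 0 < d)
    (hz : z ∈ threeMonomialAlgebra k a b d)
    (h : ((X 0 : MvPolynomial (Fin 2) k) ^ a * X 1 ^ b) ^ n = X 1 ^ d * z) :
    d / Nat.gcd a d ≤ n := by
  rw [pow_eq_monomial, X_pow_eq_monomial] at h
  obtain ⟨hle, hsupp⟩ := le_and_sub_mem_support_of_monomial_eq_mul h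
  obtain ⟨α, β, γ, hx, hy⟩ := exists_exponents_of_mem_support hz hsupp
  have hle1 := hle 1
  simp only [Finsupp.coe_tsub, Finsupp.coe_add, Pi.sub_apply, Pi.add_apply, Finsupp.single_eq_same,
    Finsupp.single_eq_of_ne zero_ne_one, Finsupp.single_eq_of_ne one_ne_zero, add_zero, zero_add,
    tsub_zero] at hx hy hle1
  have hβ : β * b < n * b := by rw [mul_comm n]; omega
  exact Nat.div_gcd_le_of_mul_eq (c := α) hd (Nat.lt_of_mul_lt_mul_right hβ) (by linarith)

end threeMonomialAlgebra

open threeMonomialAlgebra in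
theorem reduction_number_three_monomials_general (k : Type*) [Field k]
    (a d : ℕ) (had : a < d)
    (R : Subalgebra k (MvPolynomial (Fin 2) k))
    (hR : R = Algebra.adjoin k
      {(X 0 : MvPolynomial (Fin 2) k) ^ d, X 0 ^ a * X 1 ^ (d - a), X 1 ^ d}) :
    sInf {n : ℕ |
        (∃ z ∈ R, ((X 0 : MvPolynomial (Fin 2) k) ^ a * X 1 ^ (d - a)) ^ (n + 1)
            = X 0 ^ d * z) ∨
        (∃ z ∈ R, ((X 0 : MvPolynomial (Fin 2) k) ^ a * X 1 ^ (d - a)) ^ (n + 1)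
            = X 1 ^ d * z)} =
      d / Nat.gcd a d - 1 := by
  subst hR
  have hd : 0 < d := by omega
  have hN : 0 < d / Nat.gcd a d :=
    Nat.div_pos (Nat.gcd_le_right (m := a) hd) (Nat.gcd_pos_of_pos_right a hd)
  refine IsLeast.csInf_eq ⟨Or.inr ?_, fun n hn => ?_⟩
  · rw [Nat.sub_add_cancel hN]
    exact exists_pow_div_gcd_eq_X1_pow_mul had
  · have hle : d / Nat.gcd a d ≤ n + 1 := by
      rcases hn with ⟨z, hz, h⟩ | ⟨z, hz, h⟩
      · exact div_gcd_le_of_pow_eq_X0_pow_mul hd hz h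
      · exact div_gcd_le_of_pow_eq_X1_pow_mul hd hz h
    omega

/-- Proposition 3.1: for `2 ≤ a < d` with `d ≥ a+2`, `R = k[x^d, x^a y^{d-a}, y^d]` and
`Q = (x^d, y^d)`, the reduction number `r_Q(R₊)` — which is the least `n` such that
`(x^a y^{d-a})^{n+1}` is divisible in `R` by `x^d` or by `y^d` — equals
`d / gcd(a,d) - 1`. -/
theorem reduction_number_three_monomials (k : Type*) [Field k]
    (a d : ℕ) (ha : 2 ≤ a) (had : a < d) (h2 : a + 2 ≤ d)
    (R : Subalgebra k (MvPolynomial (Fin 2) k))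
    (hR : R = Algebra.adjoin k
      {(X 0 : MvPolynomial (Fin 2) k) ^ d, X 0 ^ a * X 1 ^ (d - a), X 1 ^ d}) :
    sInf {n : ℕ |
        (∃ z ∈ R, ((X 0 : MvPolynomial (Fin 2) k) ^ a * X 1 ^ (d - a)) ^ (n + 1)
            = X 0 ^ d * z) ∨
        (∃ z ∈ R, ((X 0 : MvPolynomial (Fin 2) k) ^ a * X 1 ^ (d - a)) ^ (n + 1)
            = X 1 ^ d * z)} =
      d / Nat.gcd a d - 1 :=
  reduction_number_three_monomials_general k a d had R hR
end

section
/- Let $2 \leq a < b \leq d-2$ be integers with $b \geq 2a - 1$. For $n \geq 0$ define $E_n = \bigcup_{i+j \leq n} [ia + jd, ib + jd] \subseteq \mathbb{Z}$ (union over nonnegative integers $i,j$). Then for $n \geq 1$, $E_{n+1} = E_n + \{0, d\}$ if and only if $nb + 1 \geq a + d$. -/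
/-!
Since `2a - 1 ≤ b`, consecutive intervals `[ia, ib]`, `i ≥ 1`, overlap or abut, so their union
over `1 ≤ i ≤ n` is all of `[a, nb]`. Every interval of `E (n+1)` other than `[(n+1)a, (n+1)b]`
is an interval of `E n` or the translate by `d` of one, so the equality holds iff that interval
lies in `E n + {0, d}`. Its points up to `nb` lie in `[na, nb]`. Above `nb`, the set
`E n + {0, d}` contains only `d` and points `≥ a + d`, while `[a, nb] + d` covers
`[a + d, nb + d]`; so the interval is covered iff there is no gap between `nb` and `a + d`,
i.e. iff `a + d ≤ nb + 1`.
-/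

open Pointwise

theorem Set.mem_add_zero_pair {G : Type*} [AddGroup G] {s : Set G} {d x : G} :
    x ∈ s + {0, d} ↔ x ∈ s ∨ x - d ∈ s := by
  simp only [Set.mem_add, Set.mem_insert_iff, Set.mem_singleton_iff]
  constructor
  · rintro ⟨y, hy, z, rfl | rfl, rfl⟩
    · simpa using Or.inl hy
    · simpa using Or.inr hy
  · rintro (h | h)
    · exact ⟨x, h, 0, Or.inl rfl, add_zero x⟩
    · exact ⟨x - d, h, d, Or.inr rfl, sub_add_cancel x d⟩

theorem succ_mul_le_mul_add_one {a b m : ℤ} (ha : 1 ≤ a) (hb : 2 * a - 1 ≤ b) (hm : 1 ≤ m) :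
    (m + 1) * a ≤ m * b + 1 := by
  nlinarith

def iccUnion (a b d : ℤ) (n : ℕ) : Set ℤ :=
  ⋃ i : ℕ, ⋃ j : ℕ, ⋃ (_ : i + j ≤ n),
    Set.Icc ((i : ℤ) * a + j * d) ((i : ℤ) * b + j * d)

namespace iccUnion

variable {a b d x : ℤ} {n : ℕ}

theorem mem_iff : x ∈ iccUnion a b d n ↔
    ∃ i j : ℕ, i + j ≤ n ∧ (i : ℤ) * a + j * d ≤ x ∧ x ≤ (i : ℤ) * b + j * d := by
  simp only [iccUnion, Set.mem_iUnion, Set.mem_Icc, exists_prop]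

theorem mono : Monotone (iccUnion a b d) := fun _ _ hmn _ hx ↦ by
  obtain ⟨i, j, hij, hx⟩ := mem_iff.1 hx
  exact mem_iff.2 ⟨i, j, hij.trans hmn, hx⟩

theorem succ_eq : iccUnion a b d (n + 1) =
    (iccUnion a b d n + {0, d}) ∪ Set.Icc ((n + 1 : ℤ) * a) ((n + 1 : ℤ) * b) := by
  ext x
  simp only [Set.mem_union, Set.mem_add_zero_pair, mem_iff, Set.mem_Icc]
  constructor
  · rintro ⟨i, j, hij, h1, h2⟩
    rcases Nat.lt_or_ge n (i + j) with hlt | hle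
    · obtain rfl | ⟨j, rfl⟩ : j = 0 ∨ ∃ k, j = k + 1 := by cases j <;> simp
      · obtain rfl : i = n + 1 := by omega
        push_cast at h1 h2
        exact Or.inr ⟨by linarith, by linarith⟩
      · refine Or.inl (Or.inr ⟨i, j, by omega, ?_, ?_⟩) <;> push_cast at h1 h2 <;> linarith
    · exact Or.inl (Or.inl ⟨i, j, hle, h1, h2⟩)
  · rintro ((⟨i, j, hij, h1, h2⟩ | ⟨i, j, hij, h1, h2⟩) | ⟨h1, h2⟩)
    · exact ⟨i, j, by omega, h1, h2⟩
    · refine ⟨i, j + 1, by omega, ?_, ?_⟩ <;> push_cast <;> linarith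
    · exact ⟨n + 1, 0, le_rfl, by push_cast; linarith, by push_cast; linarith⟩

theorem Icc_subset (ha : 1 ≤ a) (hb : 2 * a - 1 ≤ b) :
    Set.Icc a (n * b) ⊆ iccUnion a b d n := by
  induction n with
  | zero => simp [Set.Icc_eq_empty_of_lt (by linarith : (0 : ℤ) < a)]
  | succ n ih =>
    rintro y ⟨h1, h2⟩
    by_cases hy : y ≤ n * b
    · exact mono n.le_succ (ih ⟨h1, hy⟩)
    · have hlow : (n + 1 : ℤ) * a ≤ y := by
        rcases n.eq_zero_or_pos with rfl | hn
        · simpa using h1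
        · have := succ_mul_le_mul_add_one ha hb (m := n) (by exact_mod_cast hn)
          linarith
      rw [succ_eq]
      exact Or.inr ⟨hlow, by push_cast at h2; linarith⟩

theorem eq_zero_of_mem_of_lt (ha : 0 ≤ a) (had : a ≤ d) (hx : x ∈ iccUnion a b d n)
    (hxa : x < a) : x = 0 := by
  obtain ⟨i, j, -, h1, h2⟩ := mem_iff.1 hx
  rcases i.eq_zero_or_pos with rfl | hi
  · rcases j.eq_zero_or_pos with rfl | hj
    · simp only [Nat.cast_zero, zero_mul, add_zero] at h1 h2
      exact le_antisymm h2 h1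
    · have : (1 : ℤ) ≤ j := by exact_mod_cast hj
      nlinarith
  · have : (1 : ℤ) ≤ i := by exact_mod_cast hi
    nlinarith

theorem le_or_eq_of_mem_of_lt (ha : 0 ≤ a) (hb : 0 ≤ b) (had : a ≤ d)
    (hx : x ∈ iccUnion a b d n) (hxa : x < a + d) : x ≤ n * b ∨ x = d := by
  obtain ⟨i, j, hij, h1, h2⟩ := mem_iff.1 hx
  rcases j.eq_zero_or_pos with rfl | hj
  · have : (i : ℤ) ≤ n := by exact_mod_cast (by omega : i ≤ n)
    exact Or.inl (by push_cast at h2; nlinarith)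
  · have hj1 : (1 : ℤ) ≤ j := by exact_mod_cast hj
    rcases i.eq_zero_or_pos with rfl | hi
    · right
      push_cast at h1 h2
      rcases eq_or_lt_of_le hj1 with hj | hj
      · rw [← hj] at h1 h2; linarith
      · have : (2 : ℤ) ≤ j := by omega
        nlinarith
    · have : (1 : ℤ) ≤ i := by exact_mod_cast hi
      nlinarith

theorem Icc_subset_add_zero_pair (ha : 1 ≤ a) (hb : 2 * a - 1 ≤ b) (hbd : b ≤ d) {m : ℕ}
    (h : a + d ≤ m * b + 1) :
    Set.Icc ((m + 1 : ℤ) * a) ((m + 1 : ℤ) * b) ⊆ iccUnion a b d m + {0, d} := by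
  rintro x ⟨h1, h2⟩
  rw [Set.mem_add_zero_pair]
  by_cases hx : x ≤ m * b
  · exact Or.inl (mem_iff.2 ⟨m, 0, by omega, by push_cast; linarith, by push_cast; linarith⟩)
  · exact Or.inr (Icc_subset ha hb ⟨by linarith, by linarith⟩)

theorem not_Icc_subset_add_zero_pair (ha : 2 ≤ a) (hb : 2 * a - 1 ≤ b) (had : a ≤ d) {m : ℕ}
    (hm : 1 ≤ m) (h : m * b + 1 < a + d) :
    ¬ Set.Icc ((m + 1 : ℤ) * a) ((m + 1 : ℤ) * b) ⊆ iccUnion a b d m + {0, d} := by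
  have hm' : (1 : ℤ) ≤ m := by exact_mod_cast hm
  have hlow := succ_mul_le_mul_add_one (by linarith) hb hm'
  have not_mem : ∀ w, m * b < w → w < a + d → w ≠ d →
      w ∉ iccUnion a b d m + {0, d} := by
    intro w hmw hwd hw hmem
    rcases Set.mem_add_zero_pair.1 hmem with hmem | hmem
    · rcases le_or_eq_of_mem_of_lt (by linarith) (by linarith) had hmem hwd with h' | h' <;>
        omega
    · exact hw (sub_eq_zero.1 (eq_zero_of_mem_of_lt (by linarith) had hmem (by linarith)))
  intro hsub
  by_cases hd : m * b + 1 = d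
  · exact not_mem (m * b + 2) (by linarith) (by linarith) (by linarith)
      (hsub ⟨by linarith, by nlinarith⟩)
  · exact not_mem (m * b + 1) (by linarith) h hd (hsub ⟨hlow, by nlinarith⟩)

end iccUnion

theorem caseB1_iff_general (a b d : ℤ) (ha : 2 ≤ a) (hbd : b ≤ d - 2)
    (hb : b ≥ 2 * a - 1)
    (E : ℕ → Set ℤ)
    (hE : ∀ n : ℕ, E n = ⋃ i : ℕ, ⋃ j : ℕ, ⋃ (_ : i + j ≤ n),
        Set.Icc ((i : ℤ) * a + (j : ℤ) * d) ((i : ℤ) * b + (j : ℤ) * d)) :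
    ∀ n : ℕ, 1 ≤ n →
      (E (n + 1) = E n + ({0, d} : Set ℤ) ↔ (n : ℤ) * b + 1 ≥ a + d) := by
  obtain rfl : E = iccUnion a b d := funext hE
  intro n hn
  rw [iccUnion.succ_eq, Set.union_eq_left]
  constructor
  · intro hsub
    by_contra! h
    exact iccUnion.not_Icc_subset_add_zero_pair ha hb (by linarith) hn h hsub
  · exact iccUnion.Icc_subset_add_zero_pair (by linarith) hb (by linarith)

/-- Case B with `b ≥ 2a-1`: for `2 ≤ a < b ≤ d-2` and
`E n = ⋃_{i+j ≤ n} [ia+jd, ib+jd]`, one has `E (n+1) = E n + {0, d}` iff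
`nb + 1 ≥ a + d`, for `n ≥ 1`. -/
theorem caseB1_iff (a b d : ℤ) (ha : 2 ≤ a) (hab : a < b) (hbd : b ≤ d - 2)
    (hb : b ≥ 2 * a - 1)
    (E : ℕ → Set ℤ)
    (hE : ∀ n : ℕ, E n = ⋃ i : ℕ, ⋃ j : ℕ, ⋃ (_ : i + j ≤ n),
        Set.Icc ((i : ℤ) * a + (j : ℤ) * d) ((i : ℤ) * b + (j : ℤ) * d)) :
    ∀ n : ℕ, 1 ≤ n →
      (E (n + 1) = E n + ({0, d} : Set ℤ) ↔ (n : ℤ) * b + 1 ≥ a + d) :=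
  caseB1_iff_general a b d ha hbd hb E hE
end

section
/- Let $2 \leq a < b \leq d-2$ be integers with $(3a-1)/2 \leq b < 2a-1$. For $n \geq 0$ define $E_n = \bigcup_{i+j \leq n} [ia + jd, ib + jd] \subseteq \mathbb{Z}$. Then for $n \geq 1$, $E_{n+1} = E_n + \{0, d\}$ if and only if $nb + 1 \geq 2a + d$. -/
/-!
`E_{n+1}` is `E_n + {0, d}` together with the new interval `[(n+1)a, (n+1)b]`, so equality
holds iff that interval is covered by `E_n ∪ (E_n + d)`. Since `2b ≥ 3a - 1`, consecutive
intervals `[ia, ib]`, `i ≥ 2`, leave no gap, so `[2a, nb] ⊆ E_n`; when `nb + 1 ≥ 2a + d` every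
point of the new interval lies in `[2a, nb]` or `d` above it. Conversely, below `2a + d` the
points of `E_n + {0, d}` beyond `nb` are only `d`, `2d` and `[a + d, b + d]`, and (using
`b < 2a - 1`) one of `nb + 1`, `d + 1`, `b + d + 1` — or `2a`, `2a + 1` when `n = 1` — is a point
of the new interval that avoids them.
-/

open Pointwise

/-- `E_n`: the exponents `α` of the monomials `x^α y^(nd-α)` spanning `R_n`. -/
def exponentSet (a b d : ℤ) (n : ℕ) : Set ℤ :=
  ⋃ i : ℕ, ⋃ j : ℕ, ⋃ (_ : i + j ≤ n),
    Set.Icc ((i : ℤ) * a + (j : ℤ) * d) ((i : ℤ) * b + (j : ℤ) * d)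

theorem Set.mem_add_pair {α : Type*} [AddGroup α] {S : Set α} {d x : α} :
    x ∈ S + {0, d} ↔ x ∈ S ∨ x - d ∈ S := by
  simp only [Set.mem_add, Set.mem_insert_iff, Set.mem_singleton_iff]
  constructor
  · rintro ⟨y, hy, z, rfl | rfl, rfl⟩
    · simpa using Or.inl hy
    · simpa using Or.inr hy
  · rintro (hx | hx)
    · exact ⟨x, hx, 0, Or.inl rfl, add_zero x⟩
    · exact ⟨x - d, hx, d, Or.inr rfl, sub_add_cancel x d⟩

namespace exponentSet

variable {a b d x : ℤ} {n : ℕ}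

theorem mem_iff : x ∈ exponentSet a b d n ↔
    ∃ i j : ℕ, i + j ≤ n ∧ (i : ℤ) * a + j * d ≤ x ∧ x ≤ (i : ℤ) * b + j * d := by
  simp only [exponentSet, Set.mem_iUnion, Set.mem_Icc, exists_prop]

theorem mem_of_le {i j : ℕ} (hij : i + j ≤ n) (h₁ : (i : ℤ) * a + j * d ≤ x)
    (h₂ : x ≤ (i : ℤ) * b + j * d) : x ∈ exponentSet a b d n :=
  mem_iff.2 ⟨i, j, hij, h₁, h₂⟩

theorem mono : exponentSet a b d n ⊆ exponentSet a b d (n + 1) := fun x hx => by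
  obtain ⟨i, j, hij, h₁, h₂⟩ := mem_iff.1 hx
  exact mem_of_le (by omega) h₁ h₂

theorem add_pair_subset : exponentSet a b d n + {0, d} ⊆ exponentSet a b d (n + 1) := by
  intro x hx
  rcases Set.mem_add_pair.1 hx with hx | hx <;> obtain ⟨i, j, hij, h₁, h₂⟩ := mem_iff.1 hx
  · exact mem_of_le (by omega) h₁ h₂
  · exact mem_of_le (i := i) (j := j + 1) (by omega) (by push_cast; linarith)
      (by push_cast; linarith)

theorem subset_add_pair_union :
    exponentSet a b d (n + 1) ⊆
      (exponentSet a b d n + {0, d}) ∪ Set.Icc ((n + 1 : ℤ) * a) ((n + 1 : ℤ) * b) := by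
  intro x hx
  obtain ⟨i, j, hij, h₁, h₂⟩ := mem_iff.1 hx
  rcases j with _ | j
  · rcases (by omega : i ≤ n ∨ i = n + 1) with hi | rfl
    · exact Or.inl (Set.mem_add_pair.2 (Or.inl (mem_of_le (j := 0) (by omega) h₁ h₂)))
    · push_cast at h₁ h₂
      exact Or.inr ⟨by linarith, by linarith⟩
  · push_cast at h₁ h₂
    refine Or.inl (Set.mem_add_pair.2 (Or.inr (mem_of_le (i := i) (j := j) (by omega) ?_ ?_))) <;>
      linarith

theorem succ_eq_add_pair_iff :
    exponentSet a b d (n + 1) = exponentSet a b d n + {0, d} ↔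
      Set.Icc ((n + 1 : ℤ) * a) ((n + 1 : ℤ) * b) ⊆ exponentSet a b d n + {0, d} := by
  constructor
  · intro h x hx
    rw [← h]
    exact mem_of_le (i := n + 1) (j := 0) le_rfl (by push_cast; linarith [hx.1])
      (by push_cast; linarith [hx.2])
  · intro h
    exact (subset_add_pair_union.trans (Set.union_subset le_rfl h)).antisymm add_pair_subset

theorem exists_mem_Icc_of_mem_add_pair (hx : x ∈ exponentSet a b d n + {0, d}) :
    ∃ i j : ℕ, i ≤ n ∧ (i : ℤ) * a + j * d ≤ x ∧ x ≤ (i : ℤ) * b + j * d := by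
  rcases Set.mem_add_pair.1 hx with hx | hx <;> obtain ⟨i, j, hij, h₁, h₂⟩ := mem_iff.1 hx
  · exact ⟨i, j, by omega, h₁, h₂⟩
  · exact ⟨i, j + 1, by omega, by push_cast; linarith, by push_cast; linarith⟩

theorem mem_add_pair_of_lt (ha : 0 ≤ a) (hb : 0 ≤ b) (had : a ≤ d)
    (hx : x ∈ exponentSet a b d n + {0, d}) (hlt : x < 2 * a + d) :
    x ≤ n * b ∨ x = d ∨ (a + d ≤ x ∧ x ≤ b + d) ∨ x = 2 * d := by
  obtain ⟨i, j, hi, h₁, h₂⟩ := exists_mem_Icc_of_mem_add_pair hx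
  have hia : 0 ≤ (i : ℤ) * a := by positivity
  rcases j with _ | _ | _ | j
  · have : (i : ℤ) * b ≤ n * b := by gcongr
    push_cast at h₂
    exact Or.inl (by linarith)
  · rcases i with _ | _ | i
    · push_cast at h₁ h₂
      exact Or.inr (Or.inl (by linarith))
    · push_cast at h₁ h₂
      exact Or.inr (Or.inr (Or.inl ⟨by linarith, by linarith⟩))
    · push_cast at h₁
      nlinarith
  · rcases i with _ | i
    · push_cast at h₁ h₂
      exact Or.inr (Or.inr (Or.inr (by linarith)))
    · push_cast at h₁
      nlinarith
  · push_cast at h₁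
    nlinarith

theorem succ_mul_le_mul_add_one (hab : a ≤ b) (hb : 3 * a - 1 ≤ 2 * b) (hn : 2 ≤ n) :
    (n + 1 : ℤ) * a ≤ n * b + 1 := by
  have : (0 : ℤ) ≤ (n - 2) * (b - a) := mul_nonneg (by omega) (by linarith)
  linarith

theorem Icc_two_mul_subset (hab : a ≤ b) (hb : 3 * a - 1 ≤ 2 * b) (hn : 2 ≤ n) :
    Set.Icc (2 * a) (n * b) ⊆ exponentSet a b d n := by
  induction n, hn using Nat.le_induction with
  | base =>
    intro x ⟨h₁, h₂⟩
    push_cast at h₂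
    exact mem_of_le (i := 2) (j := 0) le_rfl (by push_cast; linarith) (by push_cast; linarith)
  | succ n hn ih =>
    intro x ⟨h₁, h₂⟩
    by_cases hxn : x ≤ n * b
    · exact mono (ih ⟨h₁, hxn⟩)
    · have := succ_mul_le_mul_add_one hab hb hn
      push_cast at h₂
      exact mem_of_le (i := n + 1) (j := 0) le_rfl (by push_cast; linarith) (by push_cast; linarith)

theorem Icc_succ_subset_add_pair (ha : 0 ≤ a) (hab : a ≤ b) (hbd : b ≤ d)
    (hb : 3 * a - 1 ≤ 2 * b) (hn : 2 ≤ n) (h : 2 * a + d ≤ n * b + 1) :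
    Set.Icc ((n + 1 : ℤ) * a) ((n + 1 : ℤ) * b) ⊆ exponentSet a b d n + {0, d} := by
  intro x ⟨h₁, h₂⟩
  rw [Set.mem_add_pair]
  by_cases hxn : x ≤ n * b
  · have : 2 * a ≤ (n + 1 : ℤ) * a := by gcongr; omega
    exact Or.inl (Icc_two_mul_subset hab hb hn ⟨by linarith, hxn⟩)
  · exact Or.inr (Icc_two_mul_subset hab hb hn ⟨by linarith, by linarith⟩)

theorem not_Icc_succ_subset_add_pair (ha : 2 ≤ a) (hab : a < b) (hbd : b ≤ d - 2)
    (hb₁ : 3 * a - 1 ≤ 2 * b) (hb₂ : b < 2 * a - 1) (hn : 1 ≤ n) (h : n * b + 1 < 2 * a + d) :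
    ¬Set.Icc ((n + 1 : ℤ) * a) ((n + 1 : ℤ) * b) ⊆ exponentSet a b d n + {0, d} := by
  intro hsub
  have gap : ∀ x, n * a + a ≤ x → x ≤ n * b + b → n * b < x → x < 2 * a + d →
      x = d ∨ (a + d ≤ x ∧ x ≤ b + d) ∨ x = 2 * d := fun x h₁ h₂ h₃ h₄ =>
    (mem_add_pair_of_lt (by omega) (by omega) (by omega)
      (hsub ⟨by linarith, by linarith⟩) h₄).resolve_left (not_le.2 h₃)
  rcases hn.eq_or_lt with rfl | hn
  · push_cast at gap h
    have := gap (2 * a) (by omega) (by omega) (by omega) (by omega)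
    have := gap (2 * a + 1) (by omega) (by omega) (by omega) (by omega)
    omega
  · have hov := succ_mul_le_mul_add_one hab.le hb₁ hn
    rw [add_one_mul] at hov
    rcases gap (n * b + 1) hov (by omega) (by omega) h with hd | hd | hd
    · have := gap (d + 1) (by omega) (by omega) (by omega) (by omega)
      omega
    · have := gap (b + d + 1) (by omega) (by omega) (by omega) (by omega)
      omega
    -- `nb + 1 = 2d ≤ 4a - 2` fails by parity for `n = 2` and because `3b > 4a - 3` for `n ≥ 3`.
    · rcases (by omega : n = 2 ∨ 3 ≤ n) with rfl | hn3
      · push_cast at hd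
        omega
      · have : 3 * b ≤ n * b := by gcongr <;> omega
        omega

end exponentSet

/-- Case B with `(3a-1)/2 ≤ b < 2a-1`: for `2 ≤ a < b ≤ d-2` and
`E n = ⋃_{i+j ≤ n} [ia+jd, ib+jd]`, one has `E (n+1) = E n + {0, d}` iff
`nb + 1 ≥ 2a + d`, for `n ≥ 1`. -/
theorem caseB2_iff (a b d : ℤ) (ha : 2 ≤ a) (hab : a < b) (hbd : b ≤ d - 2)
    (hb1 : 3 * a - 1 ≤ 2 * b) (hb2 : b < 2 * a - 1)
    (E : ℕ → Set ℤ)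
    (hE : ∀ n : ℕ, E n = ⋃ i : ℕ, ⋃ j : ℕ, ⋃ (_ : i + j ≤ n),
        Set.Icc ((i : ℤ) * a + (j : ℤ) * d) ((i : ℤ) * b + (j : ℤ) * d)) :
    ∀ n : ℕ, 1 ≤ n →
      (E (n + 1) = E n + ({0, d} : Set ℤ) ↔ (n : ℤ) * b + 1 ≥ 2 * a + d) := by
  intro n hn
  obtain rfl : E = exponentSet a b d := funext hE
  rw [exponentSet.succ_eq_add_pair_iff]
  constructor
  · intro hsub
    by_contra! h
    exact exponentSet.not_Icc_succ_subset_add_pair ha hab hbd hb1 hb2 hn h hsub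
  · intro h
    have hn2 : 2 ≤ n := by
      by_contra! hn1
      obtain rfl : n = 1 := by omega
      push_cast at h
      omega
    exact exponentSet.Icc_succ_subset_add_pair (by omega) hab.le (by omega) hb1 hn2 h
end

section
/- Let $2 \leq a < b \leq d-2$ be integers with $b \geq 2a-1$. Then for every $n \geq 1$: $\bigcup_{i+j \leq n} [ia+jd, ib+jd] + \{0,d\} = \{0, d, 2d, \ldots, (n+1)d\} \cup [a, nb] \cup \bigcup_{j=1}^{n} [a + jd, (n+1-j)b + jd]$. -/
/-!
Write `S_n = ⋃_{i+j ≤ n} [ia+jd, ib+jd]`. Once `a - 1 ≤ b - a`, consecutive intervals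
`[ka, kb]`, `[(k+1)a, (k+1)b]` overlap or touch, so `⋃_{1 ≤ k ≤ m} [ka, kb] = [a, mb]`.
Hence the `j`-th layer of `S_n` is `jd + ({0} ∪ [a, (n-j)b])`. Adding `{0, d}` puts next to
layer `j ≥ 1` the layer `j - 1` shifted by `d`, which contains it, and adds the point `(n+1)d`.
-/

open Pointwise

section

variable {a b : ℤ}

theorem Icc_mul_add_subset_Icc (ha : 0 ≤ a) (hb : 0 ≤ b) {i m : ℤ} (hi : 1 ≤ i) (him : i ≤ m)
    (c : ℤ) : Set.Icc (i * a + c) (i * b + c) ⊆ Set.Icc (a + c) (m * b + c) :=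
  fun _ ⟨h₁, h₂⟩ => ⟨by nlinarith, by nlinarith⟩

theorem exists_mem_Icc_mul_of_mem_Icc (ha : 0 < a) (hab : a - 1 ≤ b - a) {x : ℤ} :
    ∀ m : ℕ, x ∈ Set.Icc a (m * b) → ∃ k : ℕ, 1 ≤ k ∧ k ≤ m ∧ x ∈ Set.Icc (k * a) (k * b)
  | 0, ⟨h₁, h₂⟩ => by simp at h₂; omega
  | m + 1, ⟨h₁, h₂⟩ => by
    by_cases hx : x ≤ m * b
    · obtain ⟨k, hk₁, hkm, hk⟩ := exists_mem_Icc_mul_of_mem_Icc ha hab m ⟨h₁, hx⟩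
      exact ⟨k, hk₁, hkm.trans m.le_succ, hk⟩
    · refine ⟨m + 1, le_add_self, le_rfl, ?_, h₂⟩
      rcases m.eq_zero_or_pos with rfl | hm
      · simpa using h₁
      · -- `m * b + 1 ≥ (m + 1) * a` because `m * (b - a) ≥ b - a ≥ a - 1`
        have hm' : (1 : ℤ) ≤ m := by exact_mod_cast hm
        push_cast
        nlinarith

end

def gridUnion (a b d : ℤ) (n : ℕ) : Set ℤ :=
  ⋃ i : ℕ, ⋃ j : ℕ, ⋃ (_ : i + j ≤ n),
    Set.Icc ((i : ℤ) * a + (j : ℤ) * d) ((i : ℤ) * b + (j : ℤ) * d)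

def gridUnionAddPairForm (a b d : ℤ) (n : ℕ) : Set ℤ :=
  (⋃ j ∈ Finset.range (n + 2), ({(j : ℤ) * d} : Set ℤ))
    ∪ Set.Icc a ((n : ℤ) * b)
    ∪ ⋃ j ∈ Finset.Icc 1 n,
        Set.Icc (a + (j : ℤ) * d) (((n : ℤ) + 1 - (j : ℤ)) * b + (j : ℤ) * d)

section

variable {a b d : ℤ} {n : ℕ} {x : ℤ}

theorem mem_gridUnion :
    x ∈ gridUnion a b d n ↔
      ∃ i j : ℕ, i + j ≤ n ∧
        x ∈ Set.Icc ((i : ℤ) * a + (j : ℤ) * d) ((i : ℤ) * b + (j : ℤ) * d) := by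
  simp only [gridUnion, Set.mem_iUnion, exists_prop]

theorem mem_gridUnionAddPairForm :
    x ∈ gridUnionAddPairForm a b d n ↔
      ((∃ j : ℕ, j < n + 2 ∧ x = (j : ℤ) * d) ∨ x ∈ Set.Icc a ((n : ℤ) * b)) ∨
        ∃ j : ℕ, (1 ≤ j ∧ j ≤ n) ∧
          x ∈ Set.Icc (a + (j : ℤ) * d) (((n : ℤ) + 1 - (j : ℤ)) * b + (j : ℤ) * d) := by
  simp only [gridUnionAddPairForm, Set.mem_union, Set.mem_iUnion, Set.mem_singleton_iff,
    Finset.mem_range, Finset.mem_Icc, exists_prop]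

theorem mem_gridUnionAddPairForm_of_layer_zero (ha : 0 ≤ a) (hb : 0 ≤ b) {i : ℕ} (hin : i ≤ n)
    (hx : x ∈ Set.Icc ((i : ℤ) * a) ((i : ℤ) * b)) : x ∈ gridUnionAddPairForm a b d n := by
  rw [mem_gridUnionAddPairForm]
  rcases i.eq_zero_or_pos with rfl | hi
  · simp only [Nat.cast_zero, zero_mul, Set.Icc_self, Set.mem_singleton_iff] at hx
    exact Or.inl (Or.inl ⟨0, by omega, by simp [hx]⟩)
  · have hsub := Icc_mul_add_subset_Icc ha hb (i := i) (m := n) (by exact_mod_cast hi)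
      (by exact_mod_cast hin) 0
    simp only [add_zero] at hsub
    exact Or.inl (Or.inr (hsub hx))

theorem mem_gridUnionAddPairForm_of_layer_pos (ha : 0 ≤ a) (hb : 0 ≤ b) {i j : ℕ} (hj : 1 ≤ j)
    (hijn : i + j ≤ n + 1)
    (hx : x ∈ Set.Icc ((i : ℤ) * a + (j : ℤ) * d) ((i : ℤ) * b + (j : ℤ) * d)) :
    x ∈ gridUnionAddPairForm a b d n := by
  rw [mem_gridUnionAddPairForm]
  rcases i.eq_zero_or_pos with rfl | hi
  · simp only [Nat.cast_zero, zero_mul, zero_add, Set.Icc_self, Set.mem_singleton_iff] at hx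
    exact Or.inl (Or.inl ⟨j, by omega, hx⟩)
  · refine Or.inr ⟨j, ⟨hj, by omega⟩, Icc_mul_add_subset_Icc ha hb ?_ ?_ _ hx⟩
    · exact_mod_cast hi
    · have : ((i + j : ℕ) : ℤ) ≤ n + 1 := by exact_mod_cast hijn
      push_cast at this
      linarith

theorem gridUnion_add_pair_subset (ha : 0 ≤ a) (hb : 0 ≤ b) (d : ℤ) (n : ℕ) :
    gridUnion a b d n + {0, d} ⊆ gridUnionAddPairForm a b d n := by
  rintro _ ⟨y, hy, z, hz, rfl⟩
  change y + z ∈ _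
  obtain ⟨i, j, hij, hy⟩ := mem_gridUnion.1 hy
  rcases hz with rfl | rfl
  · rw [add_zero]
    rcases j.eq_zero_or_pos with rfl | hj
    · simp only [Nat.cast_zero, zero_mul, add_zero] at hy
      exact mem_gridUnionAddPairForm_of_layer_zero ha hb (by omega) hy
    · exact mem_gridUnionAddPairForm_of_layer_pos ha hb hj (by omega) hy
  · refine mem_gridUnionAddPairForm_of_layer_pos ha hb (j := j + 1) (i := i) (by omega)
      (by omega) ?_
    obtain ⟨h₁, h₂⟩ := hy
    push_cast
    constructor <;> linarith

theorem add_mem_gridUnion_add_pair {y z : ℤ} (hy : y ∈ gridUnion a b d n)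
    (hz : z ∈ ({0, d} : Set ℤ)) (hx : y + z = x) : x ∈ gridUnion a b d n + {0, d} :=
  hx ▸ Set.add_mem_add hy hz

theorem gridUnionAddPairForm_subset (ha : 0 < a) (hab : a - 1 ≤ b - a) (d : ℤ) (n : ℕ) :
    gridUnionAddPairForm a b d n ⊆ gridUnion a b d n + {0, d} := by
  intro x hx
  rcases mem_gridUnionAddPairForm.1 hx with (⟨j, hj, rfl⟩ | hx) | ⟨j, ⟨hj₁, hjn⟩, hx₁, hx₂⟩
  · rcases Nat.lt_or_ge j (n + 1) with hjn | hjn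
    · exact add_mem_gridUnion_add_pair (mem_gridUnion.2 ⟨0, j, by omega, by simp⟩)
        (Set.mem_insert _ _) (add_zero _)
    · obtain rfl : j = n + 1 := by omega
      exact add_mem_gridUnion_add_pair (y := n * d) (mem_gridUnion.2 ⟨0, n, by omega, by simp⟩)
        (Set.mem_insert_of_mem _ rfl) (by push_cast; ring)
  · obtain ⟨k, hk₁, hkn, hk⟩ := exists_mem_Icc_mul_of_mem_Icc ha hab n hx
    exact add_mem_gridUnion_add_pair (mem_gridUnion.2 ⟨k, 0, by omega, by simpa using hk⟩)
      (Set.mem_insert _ _) (add_zero _)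
  · have hj : ((j - 1 : ℕ) : ℤ) = j - 1 := by omega
    obtain ⟨k, hk₁, hkn, hk₂, hk₃⟩ := exists_mem_Icc_mul_of_mem_Icc ha hab (n + 1 - j)
      (x := x - j * d) ⟨by linarith, by push_cast [Nat.cast_sub (by omega : j ≤ n + 1)]; linarith⟩
    refine add_mem_gridUnion_add_pair (y := x - d)
      (mem_gridUnion.2 ⟨k, j - 1, by omega, ?_, ?_⟩) (Set.mem_insert_of_mem _ rfl)
      (sub_add_cancel _ _)
    · rw [hj]; linarith
    · rw [hj]; linarith

end

theorem caseB1_sum_formula_general (a b d : ℤ) (ha : 2 ≤ a)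
    (hb : b ≥ 2 * a - 1) :
    ∀ n : ℕ, 1 ≤ n →
      (⋃ i : ℕ, ⋃ j : ℕ, ⋃ (_ : i + j ≤ n),
          Set.Icc ((i : ℤ) * a + (j : ℤ) * d) ((i : ℤ) * b + (j : ℤ) * d))
        + ({0, d} : Set ℤ) =
      (⋃ j ∈ Finset.range (n + 2), ({(j : ℤ) * d} : Set ℤ))
        ∪ Set.Icc a ((n : ℤ) * b)
        ∪ ⋃ j ∈ Finset.Icc 1 n,
            Set.Icc (a + (j : ℤ) * d) (((n : ℤ) + 1 - (j : ℤ)) * b + (j : ℤ) * d) := by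
  intro n _
  have ha₀ : 0 < a := by omega
  exact (gridUnion_add_pair_subset ha₀.le (by omega) d n).antisymm
    (gridUnionAddPairForm_subset ha₀ (by omega) d n)

/-- Formula (3.2): for `2 ≤ a < b ≤ d-2` with `b ≥ 2a-1` and every `n ≥ 1`,
`(⋃_{i+j ≤ n} [ia+jd, ib+jd]) + {0, d}
  = {0, d, ..., (n+1)d} ∪ [a, nb] ∪ ⋃_{j=1}^{n} [a+jd, (n+1-j)b+jd]`. -/
theorem caseB1_sum_formula (a b d : ℤ) (ha : 2 ≤ a) (hab : a < b) (hbd : b ≤ d - 2)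
    (hb : b ≥ 2 * a - 1) :
    ∀ n : ℕ, 1 ≤ n →
      (⋃ i : ℕ, ⋃ j : ℕ, ⋃ (_ : i + j ≤ n),
          Set.Icc ((i : ℤ) * a + (j : ℤ) * d) ((i : ℤ) * b + (j : ℤ) * d))
        + ({0, d} : Set ℤ) =
      (⋃ j ∈ Finset.range (n + 2), ({(j : ℤ) * d} : Set ℤ))
        ∪ Set.Icc a ((n : ℤ) * b)
        ∪ ⋃ j ∈ Finset.Icc 1 n,
            Set.Icc (a + (j : ℤ) * d) (((n : ℤ) + 1 - (j : ℤ)) * b + (j : ℤ) * d) :=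
  caseB1_sum_formula_general a b d ha hb
end

section
/- Let $1 < a \leq b < c < d$ be integers with $c \leq 2a$ and $2b \leq d$. For $n \geq 0$ define $E_n = \bigcup_{i+j \leq n} [ia + jc, ib + jd] \subseteq \mathbb{Z}$ (union over nonnegative $i, j$). Then for $n \geq 1$, $E_{n+1} = E_n + \{0, d\}$ if and only if $nd \geq a + (n-1)c + d - 1$, equivalently $n(d-c) \geq d - c + a - 1$. -/
open Pointwise

set_option maxHeartbeats 1000000

/-- Case D: for `1 < a ≤ b < c < d` with `c ≤ 2a`, `2b ≤ d`, and
`E n = ⋃_{i+j ≤ n} [ia+jc, ib+jd]`, one has `E (n+1) = E n + {0, d}` iff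
`nd ≥ a + (n-1)c + d - 1`, for `n ≥ 1`. -/
theorem caseD_iff (a b c d : ℤ) (ha : 1 < a) (hab : a ≤ b) (hbc : b < c) (hcd : c < d)
    (hc : c ≤ 2 * a) (hb : 2 * b ≤ d)
    (E : ℕ → Set ℤ)
    (hE : ∀ n : ℕ, E n = ⋃ i : ℕ, ⋃ j : ℕ, ⋃ (_ : i + j ≤ n),
        Set.Icc ((i : ℤ) * a + (j : ℤ) * c) ((i : ℤ) * b + (j : ℤ) * d)) :
    ∀ n : ℕ, 1 ≤ n →
      (E (n + 1) = E n + ({0, d} : Set ℤ) ↔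
        (n : ℤ) * d ≥ a + ((n : ℤ) - 1) * c + d - 1) := by
  have hd0 : (0:ℤ) ≤ d := by linarith
  have hmem : ∀ (m : ℕ) (x : ℤ), x ∈ E m ↔
      ∃ i j : ℕ, i + j ≤ m ∧ (i:ℤ) * a + (j:ℤ) * c ≤ x ∧ x ≤ (i:ℤ) * b + (j:ℤ) * d := by
    intro m x
    rw [hE m]
    simp only [Set.mem_iUnion, Set.mem_Icc, exists_prop]
  have hpair : ∀ (m : ℕ) (x : ℤ), x ∈ E m + ({0, d} : Set ℤ) ↔ x ∈ E m ∨ x - d ∈ E m := by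
    intro m x
    constructor
    · rintro ⟨y, hy, z, hz, rfl⟩
      rcases hz with rfl | rfl
      · left; simpa using hy
      · right; simpa using hy
    · rintro (h | h)
      · exact ⟨x, h, 0, by simp, by ring⟩
      · exact ⟨x - d, h, d, by simp, by ring⟩
  rintro n hn
  obtain ⟨m, rfl⟩ : ∃ m : ℕ, n = m + 1 := ⟨n - 1, by omega⟩
  constructor
  · -- (→) : contrapositive via the witness w = max (nd+1) (a+nc)
    intro heq
    by_contra hlt
    push_neg at hlt
    -- hlt : (↑(m+1))*d < a + (↑(m+1) - 1)*c + d - 1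
    have hlt' : ((m:ℤ)+1)*d < a + (m:ℤ)*c + d - 1 := by push_cast at hlt; linarith
    set w : ℤ := max (((m:ℤ)+1)*d + 1) (a + ((m:ℤ)+1)*c) with hw
    have hwl : ((m:ℤ)+1)*d + 1 ≤ w := le_max_left _ _
    have hwr : a + ((m:ℤ)+1)*c ≤ w := le_max_right _ _
    have hwmem : w ∈ E (m + 1 + 1) := by
      rw [hmem]
      refine ⟨1, m + 1, by omega, ?_, ?_⟩
      · push_cast; linarith
      · push_cast
        have hcle : ((m:ℤ)+1)*c ≤ ((m:ℤ)+1)*d := by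
          have : (0:ℤ) ≤ (m:ℤ)+1 := by positivity
          nlinarith
        rcases max_le_iff.mp (le_refl w) with ⟨h1, h2⟩
        rcases le_total (((m:ℤ)+1)*d + 1) (a + ((m:ℤ)+1)*c) with h | h
        · have : w = a + ((m:ℤ)+1)*c := by rw [hw, max_eq_right h]
          rw [this]; linarith
        · have : w = ((m:ℤ)+1)*d + 1 := by rw [hw, max_eq_left h]
          rw [this]; linarith
    rw [heq, hpair] at hwmem
    rcases hwmem with h | h
    · -- w ∈ E (m+1) : impossible since w > (m+1)d = max
      obtain ⟨i, j, hij, h1, h2⟩ := (hmem _ _).1 h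
      have hijz : (i:ℤ) + (j:ℤ) ≤ (m:ℤ) + 1 := by exact_mod_cast hij
      have hi0 : (0:ℤ) ≤ (i:ℤ) := Int.natCast_nonneg i
      have hj0 : (0:ℤ) ≤ (j:ℤ) := Int.natCast_nonneg j
      have hib : (i:ℤ) * b ≤ (i:ℤ) * d := by nlinarith
      have hsum : ((i:ℤ) + (j:ℤ)) * d ≤ ((m:ℤ)+1) * d := by nlinarith
      nlinarith
    · -- w - d ∈ E (m+1)
      obtain ⟨i, j, hij, h1, h2⟩ := (hmem _ _).1 h
      have hi0 : (0:ℤ) ≤ (i:ℤ) := Int.natCast_nonneg i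
      have hj0 : (0:ℤ) ≤ (j:ℤ) := Int.natCast_nonneg j
      -- first: i ≤ 1
      have hi1 : i ≤ 1 := by
        by_contra hi2
        have hi2' : (2:ℤ) ≤ (i:ℤ) := by exact_mod_cast Nat.lt_of_not_le hi2
        have hjle : (j:ℤ) ≤ (m:ℤ) + 1 - (i:ℤ) := by
          have : (i:ℤ) + (j:ℤ) ≤ (m:ℤ) + 1 := by exact_mod_cast hij
          linarith
        have h3 : (j:ℤ) * d ≤ ((m:ℤ) + 1 - (i:ℤ)) * d :=
          mul_le_mul_of_nonneg_right hjle hd0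
        have h5 : (0:ℤ) ≤ ((i:ℤ) - 2) * (d - b) :=
          mul_nonneg (by linarith) (by linarith)
        nlinarith
      interval_cases i
      · -- i = 0 : force j = m + 1
        have hj : j = m + 1 := by
          by_contra hj'
          have hjle : (j:ℤ) ≤ (m:ℤ) := by
            have : j ≤ m := by omega
            exact_mod_cast this
          have h3 : (j:ℤ) * d ≤ (m:ℤ) * d := mul_le_mul_of_nonneg_right hjle hd0
          have h2' : w - d ≤ (0:ℤ) * b + (j:ℤ) * d := h2
          nlinarith
        subst hj
        -- lower bound: (m+1)c ≤ w - d
        have h1' : ((m:ℤ)+1) * c + d ≤ w := by push_cast at h1; linarith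
        rcases le_max_iff.mp (hw ▸ h1') with hcase | hcase
        · nlinarith
        · linarith
      · -- i = 1 : force j = m
        have hj : j = m := by
          by_contra hj'
          have hjle : (j:ℤ) ≤ (m:ℤ) - 1 := by
            have : j + 1 ≤ m := by omega
            have := (Nat.cast_le (α := ℤ)).2 this
            push_cast at this; linarith
          have h3 : (j:ℤ) * d ≤ ((m:ℤ) - 1) * d := mul_le_mul_of_nonneg_right hjle hd0
          have h2' : w - d ≤ (1:ℤ) * b + (j:ℤ) * d := h2
          nlinarith
        subst hj
        have h1' : a + (j:ℤ) * c + d ≤ w := by push_cast at h1; linarith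
        rcases le_max_iff.mp (hw ▸ h1') with hcase | hcase
        · linarith
        · linarith
  · -- (←) : covering argument
    intro hge
    have hge' : a + (m:ℤ)*c + d - 1 ≤ ((m:ℤ)+1)*d := by push_cast at hge; linarith
    apply Set.Subset.antisymm
    · intro x hx
      obtain ⟨i, j, hij, h1, h2⟩ := (hmem _ _).1 hx
      rw [hpair]
      by_cases hle : i + j ≤ m + 1
      · left; exact (hmem _ _).2 ⟨i, j, hle, h1, h2⟩
      have hij' : i + j = m + 2 := by omega
      rcases Nat.lt_or_ge i 2 with hi2 | hi2
      · interval_cases i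
        · -- i = 0, j = m + 2
          have hj : j = m + 2 := by omega
          subst hj
          have h1' : ((m:ℤ)+2) * c ≤ x := by push_cast at h1; linarith
          have h2' : x ≤ ((m:ℤ)+2) * d := by push_cast at h2; linarith
          by_cases hx1 : x ≤ ((m:ℤ)+1) * d
          · left
            refine (hmem _ _).2 ⟨0, m + 1, by omega, ?_, ?_⟩ <;> push_cast
            · nlinarith [Int.natCast_nonneg m]
            · linarith
          · push_neg at hx1
            by_cases hx2 : x ≤ b + ((m:ℤ)+1) * d
            · right
              refine (hmem _ _).2 ⟨1, m, by omega, ?_, ?_⟩ <;> push_cast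
              · linarith
              · linarith
            · push_neg at hx2
              right
              refine (hmem _ _).2 ⟨0, m + 1, by omega, ?_, ?_⟩ <;> push_cast
              · linarith
              · linarith
        · -- i = 1, j = m + 1
          have hj : j = m + 1 := by omega
          subst hj
          have h1' : a + ((m:ℤ)+1) * c ≤ x := by push_cast at h1; linarith
          have h2' : x ≤ b + ((m:ℤ)+1) * d := by push_cast at h2; linarith
          by_cases hx1 : x ≤ ((m:ℤ)+1) * d
          · left
            refine (hmem _ _).2 ⟨0, m + 1, by omega, ?_, ?_⟩ <;> push_cast
            · linarith
            · linarith
          · push_neg at hx1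
            right
            refine (hmem _ _).2 ⟨1, m, by omega, ?_, ?_⟩ <;> push_cast
            · linarith
            · linarith
      · -- i ≥ 2 : use (i-2, j+1)
        obtain ⟨i', rfl⟩ : ∃ i', i = i' + 2 := ⟨i - 2, by omega⟩
        left
        refine (hmem _ _).2 ⟨i', j + 1, by omega, ?_, ?_⟩
        · push_cast at h1 ⊢; linarith
        · push_cast at h2 ⊢; linarith
    · intro y hy
      rcases (hpair _ _).1 hy with h | h
      · obtain ⟨i, j, hij, h1, h2⟩ := (hmem _ _).1 h
        exact (hmem _ _).2 ⟨i, j, by omega, h1, h2⟩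
      · obtain ⟨i, j, hij, h1, h2⟩ := (hmem _ _).1 h
        refine (hmem _ _).2 ⟨i, j + 1, by omega, ?_, ?_⟩
        · push_cast at h1 ⊢; linarith
        · push_cast at h2 ⊢; linarith
end

section
/- Let $1 < a \leq b < c < d$ be integers with $c \leq 2a$ and $2b \leq d$. Then $[2a, 2b] \subseteq [c, d]$, and consequently, with $E_n = \bigcup_{i+j \leq n} (i[a,b] + j[c,d])$, one has $E_{n+1} = E_n \cup [(n+1)c, (n+1)d] \cup [a + nc, b + nd]$ for all $n \geq 1$. -/
open Pointwise

/-- Case D, formula (5.1): for `1 < a ≤ b < c < d` with `c ≤ 2a` and `2b ≤ d`, one has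
`[2a, 2b] ⊆ [c, d]`, and consequently, with `E n = ⋃_{i+j ≤ n} (i[a,b] + j[c,d])`,
`E (n+1) = E n ∪ [(n+1)c, (n+1)d] ∪ [a+nc, b+nd]` for all `n ≥ 1`. -/
theorem caseD_En_formula (a b c d : ℤ) (ha : 1 < a) (hab : a ≤ b) (hbc : b < c)
    (hcd : c < d) (hc : c ≤ 2 * a) (hb : 2 * b ≤ d)
    (E : ℕ → Set ℤ)
    (hE : ∀ n : ℕ, E n = ⋃ i : ℕ, ⋃ j : ℕ, ⋃ (_ : i + j ≤ n),
        Set.Icc ((i : ℤ) * a + (j : ℤ) * c) ((i : ℤ) * b + (j : ℤ) * d)) :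
    Set.Icc (2 * a) (2 * b) ⊆ Set.Icc c d ∧
      ∀ n : ℕ, 1 ≤ n →
        E (n + 1) = E n ∪ Set.Icc (((n : ℤ) + 1) * c) (((n : ℤ) + 1) * d)
          ∪ Set.Icc (a + (n : ℤ) * c) (b + (n : ℤ) * d) := by
  constructor
  · intro x hx
    simp only [Set.mem_Icc] at *
    omega
  · intro n hn
    ext x
    rw [hE, hE]
    simp only [Set.mem_iUnion, Set.mem_union, Set.mem_Icc]
    constructor
    · rintro ⟨i, j, hij, hx1, hx2⟩
      by_cases h : i + j ≤ n
      · exact Or.inl (Or.inl ⟨i, j, h, hx1, hx2⟩)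
      · have hij' : i + j = n + 1 := by omega
        match i with
        | 0 =>
          have hj : (j : ℤ) = (n : ℤ) + 1 := by exact_mod_cast congrArg Nat.cast (by omega : j = n + 1)
          refine Or.inl (Or.inr ⟨?_, ?_⟩) <;> push_cast at hx1 hx2 ⊢ <;> rw [hj] at * <;> linarith
        | 1 =>
          have hj : (j : ℤ) = (n : ℤ) := by exact_mod_cast congrArg Nat.cast (by omega : j = n)
          refine Or.inr ⟨?_, ?_⟩ <;> push_cast at hx1 hx2 ⊢ <;> rw [hj] at * <;> linarith
        | (k + 2) =>
          refine Or.inl (Or.inl ⟨k, j + 1, by omega, ?_, ?_⟩) <;>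
            push_cast at hx1 hx2 ⊢ <;> linarith
    · rintro ((⟨i, j, hij, hx1, hx2⟩ | ⟨hx1, hx2⟩) | ⟨hx1, hx2⟩)
      · exact ⟨i, j, by omega, hx1, hx2⟩
      · refine ⟨0, n + 1, by omega, ?_, ?_⟩ <;> push_cast <;> linarith
      · refine ⟨1, n, by omega, ?_, ?_⟩ <;> push_cast <;> linarith
end

section
/- Let $1 \leq a < b \leq c < e < d$ be integers with $e \leq 2b$ and $2c \leq a + d$. Define $F_n = \bigcup_{j=0}^{n} [je, (n-j)a + jd]$ and $E_n = \bigcup_{i=0}^{n}(F_{n-i} + i[b,c])$. Then for all $n \geq 1$, $E_n = F_n \cup (F_{n-1} + [b,c])$. -/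
open Pointwise
set_option maxHeartbeats 1000000

/-- Case E: for `1 ≤ a < b ≤ c < e < d` with `e ≤ 2b` and `2c ≤ a+d`, setting
`F n = ⋃_{j=0}^n [je, (n-j)a + jd]` and `E n = ⋃_{i=0}^n (F (n-i) + i[b,c])`, one has
`E n = F n ∪ (F (n-1) + [b,c])` for all `n ≥ 1`. -/
theorem caseE_En (a b c e d : ℤ) (ha : 1 ≤ a) (hab : a < b) (hbc : b ≤ c)
    (hce : c < e) (hed : e < d) (he : e ≤ 2 * b) (hc : 2 * c ≤ a + d)
    (F : ℕ → Set ℤ)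
    (hF : ∀ n : ℕ, F n = ⋃ j ∈ Finset.range (n + 1),
        Set.Icc ((j : ℤ) * e) (((n - j : ℕ) : ℤ) * a + (j : ℤ) * d))
    (E : ℕ → Set ℤ)
    (hEdef : ∀ n : ℕ, E n = ⋃ i ∈ Finset.range (n + 1),
        (F (n - i) + Set.Icc ((i : ℤ) * b) ((i : ℤ) * c))) :
    ∀ n : ℕ, 1 ≤ n → E n = F n ∪ (F (n - 1) + Set.Icc b c) := by
  intro n hn
  ext x
  simp only [hEdef, hF, Set.mem_iUnion, Set.mem_union, Set.mem_add, Set.mem_Icc,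
    Finset.mem_range, Nat.lt_succ_iff, exists_prop]
  constructor
  · rintro ⟨i, hi, y, ⟨j, hj, hy1, hy2⟩, t, ⟨ht1, ht2⟩, rfl⟩
    have hcast : ((n - i - j : ℕ) : ℤ) = (n : ℤ) - i - j := by omega
    rw [hcast] at hy2
    have hk0 : (0:ℤ) ≤ (i / 2 : ℕ) := Int.natCast_nonneg _
    rcases Nat.even_or_odd i with ⟨k, hk⟩ | ⟨k, hk⟩
    · left
      have hik : (i : ℤ) = 2 * k := by omega
      have hk0 : (0:ℤ) ≤ (k:ℤ) := Int.natCast_nonneg _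
      refine ⟨j + k, by omega, ?_, ?_⟩
      · push_cast
        nlinarith [mul_nonneg hk0 (by linarith : (0:ℤ) ≤ 2*b - e)]
      · have : ((n - (j + k) : ℕ) : ℤ) = (n:ℤ) - j - k := by omega
        rw [this]
        push_cast
        nlinarith [mul_nonneg hk0 (by linarith : (0:ℤ) ≤ a + d - 2*c)]
    · right
      have hik : (i : ℤ) = 2 * k + 1 := by omega
      have hk0 : (0:ℤ) ≤ (k:ℤ) := Int.natCast_nonneg _
      set L : ℤ := ((j:ℤ) + k) * e with hL
      set U : ℤ := ((n:ℤ) - 1 - j - k) * a + ((j:ℤ) + k) * d with hU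
      have h1 : L + b ≤ y + t := by
        rw [hL]; nlinarith [mul_nonneg hk0 (by linarith : (0:ℤ) ≤ 2*b - e)]
      have h2 : y + t ≤ U + c := by
        rw [hU]; nlinarith [mul_nonneg hk0 (by linarith : (0:ℤ) ≤ a + d - 2*c)]
      have h3 : L ≤ U := by
        rw [hL, hU]
        have hjk : (0:ℤ) ≤ (n:ℤ) - 1 - j - k := by
          have : j + k ≤ n - 1 := by omega
          have := (Int.ofNat_le.mpr this); push_cast at this ⊢; omega
        nlinarith [mul_nonneg hjk (by linarith : (0:ℤ) ≤ a),
          mul_nonneg (by positivity : (0:ℤ) ≤ (j:ℤ) + k) (by linarith : (0:ℤ) ≤ d - e)]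
      refine ⟨max L (y + t - c), ⟨j + k, by omega, ?_, ?_⟩, y + t - max L (y + t - c),
        ⟨?_, ?_⟩, by ring⟩
      · push_cast; exact le_max_left _ _
      · have : ((n - 1 - (j + k) : ℕ) : ℤ) = (n:ℤ) - 1 - j - k := by omega
        rw [this]
        push_cast
        have : max L (y + t - c) ≤ U := max_le h3 (by linarith)
        rw [hU] at this; linarith
      · have : max L (y + t - c) ≤ y + t - b := max_le (by linarith) (by linarith)
        linarith
      · have : y + t - c ≤ max L (y + t - c) := le_max_right _ _
        linarith
  · rintro (⟨j, hj, h1, h2⟩ | ⟨y, hy, s, hs, rfl⟩)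
    · exact ⟨0, by omega, x, ⟨j, by simpa using hj, h1, by simpa using h2⟩, 0,
        by simp, by ring⟩
    · refine ⟨1, by omega, y, ?_, s, by simpa using hs, rfl⟩
      simpa using hy
end

section
/- Let $1 \leq a < b \leq c < e < d$ be integers with $e \leq 2b$ and $2c \leq a + d$. Let $F_n = \bigcup_{j=0}^{n}[je, (n-j)a + jd]$. Then $F_n + \{0,d\} = [0, na] \cup \bigcup_{j=1}^{n} [je, (n+1-j)a + jd] \cup [ne + d, (n+1)d]$ for all $n \geq 1$. -/
open Pointwise

/-- Case E, formula (6.6): for `1 ≤ a < b ≤ c < e < d` with `e ≤ 2b` and `2c ≤ a+d`,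
and `F n = ⋃_{j=0}^n [je, (n-j)a + jd]`, one has
`F n + {0,d} = [0, na] ∪ ⋃_{j=1}^n [je, (n+1-j)a + jd] ∪ [ne+d, (n+1)d]`
for all `n ≥ 1`. -/
theorem caseE_Fn_sum (a b c e d : ℤ) (ha : 1 ≤ a) (hab : a < b) (hbc : b ≤ c)
    (hce : c < e) (hed : e < d) (he : e ≤ 2 * b) (hc : 2 * c ≤ a + d)
    (F : ℕ → Set ℤ)
    (hF : ∀ n : ℕ, F n = ⋃ j ∈ Finset.range (n + 1),
        Set.Icc ((j : ℤ) * e) (((n - j : ℕ) : ℤ) * a + (j : ℤ) * d)) :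
    ∀ n : ℕ, 1 ≤ n →
      F n + ({0, d} : Set ℤ) =
        Set.Icc 0 ((n : ℤ) * a)
          ∪ (⋃ j ∈ Finset.Icc 1 n,
              Set.Icc ((j : ℤ) * e) (((n : ℤ) + 1 - (j : ℤ)) * a + (j : ℤ) * d))
          ∪ Set.Icc ((n : ℤ) * e + d) (((n : ℤ) + 1) * d) := by
  intro n hn
  ext x
  simp only [hF, Set.mem_add, Set.mem_iUnion, Set.mem_Icc, Finset.mem_range,
    Finset.mem_Icc, Set.mem_union, Set.mem_insert_iff, Set.mem_singleton_iff,
    exists_prop, Nat.lt_succ_iff]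
  constructor
  · rintro ⟨y, ⟨j, hj, hy1, hy2⟩, z, (rfl | rfl), rfl⟩
    · -- z = 0
      rw [Nat.cast_sub hj] at hy2
      have hjn : (j : ℤ) ≤ n := by exact_mod_cast hj
      rcases Nat.eq_zero_or_pos j with rfl | hj1
      · left; left
        constructor <;> [simpa using hy1; simpa using hy2]
      · left; right
        refine ⟨j, ⟨hj1, hj⟩, ?_, ?_⟩
        · simpa using hy1
        · have h2 : ((n : ℤ) - j) * a + j * d ≤ ((n : ℤ) + 1 - j) * a + j * d := by
            nlinarith
          linarith
    · -- z = d
      rw [Nat.cast_sub hj] at hy2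
      rcases eq_or_lt_of_le hj with rfl | hjlt
      · right
        constructor
        · linarith
        · nlinarith
      · left; right
        refine ⟨j + 1, ⟨Nat.succ_le_succ (Nat.zero_le j), hjlt⟩, ?_, ?_⟩
        · push_cast; linarith
        · push_cast; linarith
  · rintro ((⟨h1, h2⟩ | ⟨j, ⟨hj1, hj2⟩, hx1, hx2⟩) | ⟨h1, h2⟩)
    · refine ⟨x, ⟨0, Nat.zero_le n, ?_, ?_⟩, 0, Or.inl rfl, add_zero x⟩
      · simpa using h1
      · simpa using h2
    · have hjn : (j : ℤ) ≤ n := by exact_mod_cast hj2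
      have hj1' : (1 : ℤ) ≤ j := by exact_mod_cast hj1
      by_cases h : x ≤ ((n : ℤ) - j) * a + j * d
      · refine ⟨x, ⟨j, hj2, hx1, ?_⟩, 0, Or.inl rfl, add_zero x⟩
        rw [Nat.cast_sub hj2]; exact h
      · refine ⟨x - d, ⟨j - 1, le_trans (Nat.sub_le j 1) hj2, ?_, ?_⟩, d,
          Or.inr rfl, by ring⟩
        · have hc1 : ((j - 1 : ℕ) : ℤ) = (j : ℤ) - 1 := by
            have := Nat.cast_sub hj1 (R := ℤ); simpa using this
          rw [hc1]
          have key : ((j : ℤ) - 1) * e + d ≤ ((n : ℤ) - j) * a + j * d := by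
            nlinarith [mul_nonneg (show (0:ℤ) ≤ (j:ℤ) - 1 by linarith)
              (show (0:ℤ) ≤ d - e by linarith),
              mul_nonneg (show (0:ℤ) ≤ (n:ℤ) - j by linarith)
              (show (0:ℤ) ≤ a by linarith)]
          linarith
        · have hc1 : ((j - 1 : ℕ) : ℤ) = (j : ℤ) - 1 := by
            have := Nat.cast_sub hj1 (R := ℤ); simpa using this
          rw [Nat.cast_sub (le_trans (Nat.sub_le j 1) hj2), hc1]
          linarith
    · refine ⟨x - d, ⟨n, le_refl n, by linarith, ?_⟩, d, Or.inr rfl, by ring⟩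
      simp only [Nat.sub_self, Nat.cast_zero, zero_mul, zero_add]
      linarith
end

section
/- Let $d \geq 4$ and let $E_n$ be the set of all sums $\alpha = \sum_{i=1}^n \alpha_i$ of $n$ elements $\alpha_i \in \{0,1,d-1,d\}$; concretely $E_n = \bigcup_{i+j \leq n}[j(d-1), i + jd]$. Then the least $n \geq 1$ with $E_{n+1} = E_n + \{0, d\}$ is $n = d - 2$. -/
open Pointwise

/-- For `n ≥ d-2`, the union `⋃_{i+j ≤ n} [j(d-1), i+jd]` is the interval `[0, nd]`. -/
lemma EccA (d n : ℕ) (hd : 4 ≤ d) (hn : d - 2 ≤ n) :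
    (⋃ i : ℕ, ⋃ j : ℕ, ⋃ (_ : i + j ≤ n),
        Set.Icc ((j : ℤ) * ((d : ℤ) - 1)) ((i : ℤ) + (j : ℤ) * (d : ℤ)))
      = Set.Icc 0 ((n : ℤ) * d) := by
  have hD : (4:ℤ) ≤ (d:ℤ) := by exact_mod_cast hd
  ext x
  simp only [Set.mem_iUnion, Set.mem_Icc]
  constructor
  · rintro ⟨i, j, hij, h1, h2⟩
    have hj : (j:ℤ) ≤ n := by exact_mod_cast le_trans (Nat.le_add_left _ _) hij
    have hi : (i:ℤ) + j ≤ n := by exact_mod_cast hij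
    have hj0 : (0:ℤ) ≤ j := Int.ofNat_nonneg j
    have hi0 : (0:ℤ) ≤ i := Int.ofNat_nonneg i
    constructor
    · nlinarith [mul_nonneg hj0 (show (0:ℤ) ≤ (d:ℤ) - 1 by linarith)]
    · nlinarith [mul_nonneg (sub_nonneg.mpr hj) (show (0:ℤ) ≤ (d:ℤ) - 1 by linarith)]
  · rintro ⟨hx0, hxn⟩
    set t := x.toNat with ht
    have hxt : (t:ℤ) = x := Int.toNat_of_nonneg hx0
    have hd1 : 0 < d - 1 := by omega
    by_cases hcase : n ≤ t / (d-1)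
    · refine ⟨0, n, by omega, ?_, ?_⟩
      · have : n * (d-1) ≤ t := (Nat.le_div_iff_mul_le hd1).mp hcase
        calc (n:ℤ) * ((d:ℤ) - 1) = ((n * (d-1) : ℕ) : ℤ) := by
              push_cast [Nat.cast_sub (by omega : 1 ≤ d)]; ring
          _ ≤ (t:ℤ) := by exact_mod_cast this
          _ = x := hxt
      · calc x ≤ (n:ℤ) * d := hxn
          _ = (0:ℕ) + (n:ℤ) * d := by push_cast; ring
    · push_neg at hcase
      set j := t / (d-1) with hjdef
      have hjn : j < n := hcase
      have hmod : (d-1) * j + t % (d-1) = t := Nat.div_add_mod t (d-1)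
      have hr : t % (d-1) < d - 1 := Nat.mod_lt _ hd1
      have hjd : j * d = (d-1)*j + j := by
        obtain ⟨e, he⟩ : ∃ e, d = e + 1 := ⟨d - 1, by omega⟩
        subst he; simp [Nat.add_sub_cancel]; ring_nf
      have key : t ≤ (n - j) + j * d := by
        have hin : (n - j) + j = n := by omega
        calc t = (d-1)*j + t % (d-1) := hmod.symm
          _ ≤ (d-1)*j + (d-2) := Nat.add_le_add_left (by omega) _
          _ ≤ (d-1)*j + n := Nat.add_le_add_left hn _
          _ = (n - j) + j * d := by
              rw [hjd]; generalize (d-1)*j = A; omega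
      refine ⟨n - j, j, by omega, ?_, ?_⟩
      · have hjm : j * (d-1) ≤ t := Nat.div_mul_le_self t (d-1)
        calc (j:ℤ) * ((d:ℤ) - 1) = ((j * (d-1) : ℕ) : ℤ) := by
              push_cast [Nat.cast_sub (by omega : 1 ≤ d)]; ring
          _ ≤ (t:ℤ) := by exact_mod_cast hjm
          _ = x := hxt
      · calc x = (t:ℤ) := hxt.symm
          _ ≤ (((n - j) + j * d : ℕ) : ℤ) := by exact_mod_cast key
          _ = ((n - j : ℕ) : ℤ) + (j:ℤ) * d := by push_cast; ring

lemma addIcc (M dd : ℤ) (h0 : 0 ≤ dd) (h1 : dd ≤ M + 1) :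
    Set.Icc 0 M + ({0, dd} : Set ℤ) = Set.Icc 0 (M + dd) := by
  ext x
  simp only [Set.mem_add, Set.mem_Icc, Set.mem_insert_iff, Set.mem_singleton_iff]
  constructor
  · rintro ⟨a, ⟨ha0, haM⟩, b, hb | hb, rfl⟩ <;> subst hb <;> constructor <;> omega
  · rintro ⟨hx0, hxM⟩
    by_cases h : x ≤ M
    · exact ⟨x, ⟨hx0, h⟩, 0, Or.inl rfl, by ring⟩
    · exact ⟨x - dd, ⟨by omega, by omega⟩, dd, Or.inr rfl, by ring⟩

/-- Reduction number of `k[x^d, x^{d-1}y, xy^{d-1}, y^d]` with respect to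
`Q = (x^d, y^d)`: for `d ≥ 4` and `E n = ⋃_{i+j ≤ n} [j(d-1), i+jd]`, the least
`n ≥ 1` with `E (n+1) = E n + {0, d}` is `n = d - 2`. -/
theorem smooth_curve_reduction_number (d : ℕ) (hd : 4 ≤ d)
    (E : ℕ → Set ℤ)
    (hE : ∀ n : ℕ, E n = ⋃ i : ℕ, ⋃ j : ℕ, ⋃ (_ : i + j ≤ n),
        Set.Icc ((j : ℤ) * ((d : ℤ) - 1)) ((i : ℤ) + (j : ℤ) * (d : ℤ))) :
    sInf {n : ℕ | 1 ≤ n ∧ E (n + 1) = E n + ({0, (d : ℤ)} : Set ℤ)} = d - 2 := by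
  have hD : (4:ℤ) ≤ (d:ℤ) := by exact_mod_cast hd
  have hd2 : ((d - 2 : ℕ) : ℤ) = (d:ℤ) - 2 := by push_cast [Nat.cast_sub (by omega : 2 ≤ d)]; ring
  have hmem : (d - 2) ∈ {n : ℕ | 1 ≤ n ∧ E (n + 1) = E n + ({0, (d : ℤ)} : Set ℤ)} := by
    refine ⟨by omega, ?_⟩
    rw [hE, hE, EccA d (d-2+1) hd (by omega), EccA d (d-2) hd le_rfl,
      addIcc _ _ (by linarith) (by rw [hd2]; nlinarith)]
    push_cast [Nat.cast_sub (by omega : 2 ≤ d)]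
    ring
  have hlb : ∀ m ∈ {n : ℕ | 1 ≤ n ∧ E (n + 1) = E n + ({0, (d : ℤ)} : Set ℤ)}, d - 2 ≤ m := by
    rintro m ⟨hm1, hmE⟩
    by_contra h
    push_neg at h
    have hm3 : (m:ℤ) + 3 ≤ d := by
      have : m + 3 ≤ d := by omega
      exact_mod_cast this
    have hm1' : (1:ℤ) ≤ m := by exact_mod_cast hm1
    have hx1 : ((m:ℤ) + 1) * ((d:ℤ) - 1) ∈ E (m + 1) := by
      rw [hE]
      simp only [Set.mem_iUnion, Set.mem_Icc]
      refine ⟨0, m + 1, by omega, ?_, ?_⟩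
      · push_cast; linarith
      · push_cast; nlinarith
    rw [hmE] at hx1
    rw [hE] at hx1
    simp only [Set.mem_add, Set.mem_iUnion, Set.mem_Icc, Set.mem_insert_iff,
      Set.mem_singleton_iff] at hx1
    obtain ⟨a, ⟨i, j, hij, ha1, ha2⟩, b, hb, hab⟩ := hx1
    have hi : (i:ℤ) + j ≤ m := by exact_mod_cast hij
    have hi0 : (0:ℤ) ≤ i := Int.ofNat_nonneg i
    have hj0 : (0:ℤ) ≤ j := Int.ofNat_nonneg j
    have hjm : (j:ℤ) ≤ m := by linarith
    rcases hb with hb | hb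
    · -- b = 0, so a = (m+1)(d-1)
      subst hb
      have haeq : a = ((m:ℤ) + 1) * ((d:ℤ) - 1) := by linarith
      rw [haeq] at ha2
      nlinarith [mul_nonneg (sub_nonneg.mpr hjm) (show (0:ℤ) ≤ (d:ℤ) - 2 by linarith)]
    · -- b = d, so a = (m+1)(d-1) - d
      subst hb
      have haeq : a = ((m:ℤ) + 1) * ((d:ℤ) - 1) - d := by linarith
      rw [haeq] at ha1 ha2
      by_cases hje : (j:ℤ) = m
      · rw [hje] at ha1
        nlinarith
      · have hjm1 : (j:ℤ) ≤ (m:ℤ) - 1 := by omega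
        nlinarith [mul_nonneg (show (0:ℤ) ≤ (m:ℤ) - 1 - j by linarith)
          (show (0:ℤ) ≤ (d:ℤ) - 2 by linarith)]
  exact le_antisymm (Nat.sInf_le hmem) (le_csInf ⟨_, hmem⟩ hlb)
end

section
/- Let $d \geq 4$, $R = k[x^d, x^{d-1}y, x^{d-2}y^2, y^d]$, and $Q = (x^d, y^d)$. Then $r_Q(R_+) = \lceil (d-1)/2 \rceil$; combinatorially, with $E_n = \bigcup_{i=0}^n [i(d-2), id]$, the least $n \geq 1$ with $E_{n+1} = E_n + \{0,d\}$ is $\lceil (d-1)/2 \rceil$. -/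
open Pointwise

/-- Corollary 2.2: the reduction number of `R = k[x^d, x^{d-1}y, x^{d-2}y^2, y^d]`
(`d ≥ 4`) with respect to `Q = (x^d, y^d)` is `⌈(d-1)/2⌉`; combinatorially, with
`E n = ⋃_{i=0}^n [i(d-2), id]` recording the `x`-exponents of the degree-`n` monomials
of `R`, the least `n ≥ 1` with `E (n+1) = E n + {0, d}` is `⌈(d-1)/2⌉`. -/
theorem space_curve_reduction_number (d : ℕ) (hd : 4 ≤ d)
    (E : ℕ → Set ℤ)
    (hE : ∀ n : ℕ, E n = ⋃ i ∈ Finset.range (n + 1),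
        Set.Icc ((i : ℤ) * ((d : ℤ) - 2)) ((i : ℤ) * (d : ℤ))) :
    ((sInf {n : ℕ | 1 ≤ n ∧ E (n + 1) = E n + ({0, (d : ℤ)} : Set ℤ)} : ℕ) : ℤ) =
      ⌈((d : ℚ) - 1) / 2⌉ := by
  have hD4 : (4 : ℤ) ≤ (d : ℤ) := by exact_mod_cast hd
  set D : ℤ := (d : ℤ) with hDdef
  -- membership characterization
  have memE : ∀ (n : ℕ) (x : ℤ),
      x ∈ E n ↔ ∃ i : ℕ, i ≤ n ∧ (i : ℤ) * (D - 2) ≤ x ∧ x ≤ (i : ℤ) * D := by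
    intro n x
    rw [hE n]
    simp only [Set.mem_iUnion, Finset.mem_range, Nat.lt_succ_iff, Set.mem_Icc]
    tauto
  have memsum : ∀ (n : ℕ) (x : ℤ),
      x ∈ E n + ({0, D} : Set ℤ) ↔ x ∈ E n ∨ x - D ∈ E n := by
    intro n x
    simp only [Set.mem_add, Set.mem_insert_iff, Set.mem_singleton_iff]
    constructor
    · rintro ⟨a, ha, b, (rfl | rfl), rfl⟩
      · simpa using Or.inl ha
      · right; simpa using ha
    · rintro (h | h)
      · exact ⟨x, h, 0, Or.inl rfl, by ring⟩
      · exact ⟨x - D, h, D, Or.inr rfl, by ring⟩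
  -- sufficiency
  have h1 : ∀ n : ℕ, D ≤ 2 * (n : ℤ) + 1 → E (n + 1) = E n + ({0, D} : Set ℤ) := by
    intro n hn
    ext x
    rw [memsum, memE, memE, memE]
    constructor
    · rintro ⟨i, hi, hx1, hx2⟩
      by_cases hin : i ≤ n
      · exact Or.inl ⟨i, hin, hx1, hx2⟩
      · have hie : i = n + 1 := by omega
        subst hie
        push_cast at hx1 hx2
        by_cases hxd : x ≤ (n : ℤ) * D
        · exact Or.inl ⟨n, le_refl _, by nlinarith, hxd⟩
        · have hx3 : (n : ℤ) * D + 1 ≤ x := Int.add_one_le_iff.mpr (not_le.mp hxd)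
          exact Or.inr ⟨n, le_refl _, by nlinarith, by nlinarith⟩
    · rintro (⟨i, hi, hx1, hx2⟩ | ⟨i, hi, hx1, hx2⟩)
      · exact ⟨i, by omega, hx1, hx2⟩
      · refine ⟨i + 1, by omega, ?_, ?_⟩ <;> push_cast <;> nlinarith
  -- necessity
  have h2 : ∀ n : ℕ, 2 * (n : ℤ) + 2 ≤ D → E (n + 1) ≠ E n + ({0, D} : Set ℤ) := by
    intro n hn h
    set x : ℤ := ((n : ℤ) + 1) * (D - 2) + 1 with hxdef
    have hx : x ∈ E (n + 1) := by
      rw [memE]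
      exact ⟨n + 1, le_refl _, by push_cast; nlinarith, by push_cast; nlinarith⟩
    rw [h, memsum, memE, memE] at hx
    rcases hx with ⟨i, hi, hx1, hx2⟩ | ⟨i, hi, hx1, hx2⟩
    · have hiD : (i : ℤ) * D ≤ (n : ℤ) * D := by
        have : (i : ℤ) ≤ (n : ℤ) := by exact_mod_cast hi
        exact mul_le_mul_of_nonneg_right this (by linarith)
      nlinarith
    · rcases lt_or_eq_of_le hi with hlt | rfl
      · have hiD : (i : ℤ) * D ≤ ((n : ℤ) - 1) * D := by
          have : (i : ℤ) ≤ (n : ℤ) - 1 := by omega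
          exact mul_le_mul_of_nonneg_right this (by linarith)
        nlinarith
      · nlinarith
  -- the infimum
  have key : sInf {n : ℕ | 1 ≤ n ∧ E (n + 1) = E n + ({0, D} : Set ℤ)} = d / 2 := by
    have hmem : d / 2 ∈ {n : ℕ | 1 ≤ n ∧ E (n + 1) = E n + ({0, D} : Set ℤ)} := by
      refine ⟨by omega, h1 _ ?_⟩
      rw [hDdef]; omega
    refine le_antisymm (Nat.sInf_le hmem) (le_csInf ⟨_, hmem⟩ ?_)
    rintro n ⟨hn1, hne⟩
    by_contra hlt
    push_neg at hlt
    have hc : 2 * (n : ℤ) + 2 ≤ D := by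
      rw [hDdef]; omega
    exact h2 n hc hne
  rw [key]
  -- final ceiling computation
  rcases Nat.even_or_odd d with ⟨k, hk⟩ | ⟨k, hk⟩
  · subst hk
    have h1 : (k + k) / 2 = k := by omega
    rw [h1]
    have : ((k : ℚ) + k - 1) / 2 = (k : ℚ) - 1 / 2 := by ring
    push_cast
    rw [this]
    symm
    rw [Int.ceil_eq_iff]
    constructor <;> push_cast <;> norm_num
  · subst hk
    have h1 : (2 * k + 1) / 2 = k := by omega
    rw [h1]
    have : ((2 * k + 1 : ℕ) : ℚ) - 1 = 2 * (k : ℚ) := by push_cast; ring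
    rw [this]
    rw [show (2 * (k : ℚ)) / 2 = (k : ℚ) by ring]
    simp
end
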